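/- arXiv:1202.6423 — 7 statements merged into one kernel-verified Lean document; each statement's English description precedes it below -/
import Mathlib

section
/- Let σ > 0 and 0 ≤ P < σ². Then the Kullback–Leibler divergence between the centered real Gaussian measure of variance σ² and the centered real Gaussian measure of variance σ² + P satisfies D(N(0,σ²) ‖ N(0,σ²+P)) ≤ P²/(4σ⁴). -/
/-!
The density ratio of two real Gaussians is the exponential of a quadratic, so the divergence
only involves second moments:
`D(N(μ₁,v₁) ‖ N(μ₂,v₂)) = (log (v₂/v₁) + (v₁ + (μ₁-μ₂)²)/v₂ - 1)/2`.
For equal means and `x = v₂/v₁ ≥ 1` this is `(log x + 1/x - 1)/2`, and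
`log x ≤ sinh (log x) = (x - 1/x)/2` bounds it by `(x-1)²/(4x) ≤ (x-1)²/4`.
-/

open MeasureTheory ProbabilityTheory Real
open scoped NNReal

/-- The Kullback–Leibler divergence `D(P‖Q) = ∫ log(dP/dQ) dP`
(for `P ≪ Q` this equals `∫ p(x) ln(p(x)/q(x)) dx` where `p, q` are densities). -/
noncomputable def klDiv {α : Type*} [MeasurableSpace α] (P Q : Measure α) : ℝ :=
  ∫ x, Real.log ((P.rnDeriv Q) x).toReal ∂P

lemma log_le_sub_inv_div_two {x : ℝ} (hx : 1 ≤ x) : log x ≤ (x - x⁻¹) / 2 := by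
  rw [← sinh_log (by positivity)]
  exact self_le_sinh_iff.mpr (log_nonneg hx)

lemma log_add_inv_sub_one_le {x : ℝ} (hx : 1 ≤ x) : log x + x⁻¹ - 1 ≤ (x - 1) ^ 2 / 2 := by
  have hx0 : 0 < x := by linarith
  calc log x + x⁻¹ - 1 ≤ (x - x⁻¹) / 2 + x⁻¹ - 1 := by linarith [log_le_sub_inv_div_two hx]
    _ = (x - 1) ^ 2 / (2 * x) := by field_simp; ring
    _ ≤ (x - 1) ^ 2 / 2 := div_le_div_of_nonneg_left (by positivity) two_pos (by linarith)

lemma integral_sq_sub_gaussianReal (μ m : ℝ) (v : ℝ≥0) :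
    ∫ x, (x - m) ^ 2 ∂gaussianReal μ v = v + (μ - m) ^ 2 := by
  have hX : MemLp (fun x : ℝ ↦ x) 2 (gaussianReal μ v) := memLp_id_gaussianReal 2
  have hsq : ∫ x, x ^ 2 ∂gaussianReal μ v = v + μ ^ 2 := by
    have := variance_eq_sub hX
    rw [variance_fun_id_gaussianReal, integral_id_gaussianReal] at this
    simp only [Pi.pow_apply] at this
    linarith
  have hlin : Integrable (fun x : ℝ ↦ 2 * m * x) (gaussianReal μ v) :=
    (hX.integrable one_le_two).const_mul _
  have hquad : Integrable (fun x : ℝ ↦ x ^ 2 - 2 * m * x) (gaussianReal μ v) :=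
    hX.integrable_sq.sub hlin
  calc ∫ x, (x - m) ^ 2 ∂gaussianReal μ v
      = ∫ x, (x ^ 2 - 2 * m * x + m ^ 2) ∂gaussianReal μ v := by congr with x; ring
    _ = v + (μ - m) ^ 2 := by
      rw [integral_add hquad (integrable_const _), integral_sub hX.integrable_sq hlin,
        integral_const_mul, hsq, integral_id_gaussianReal, integral_const,
        probReal_univ, one_smul]
      ring

lemma log_gaussianPDFReal (μ : ℝ) {v : ℝ≥0} (hv : v ≠ 0) (x : ℝ) :
    log (gaussianPDFReal μ v x) = -log (2 * π * v) / 2 - (x - μ) ^ 2 / (2 * v) := by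
  rw [gaussianPDFReal, log_mul (by positivity) (exp_ne_zero _), log_inv, log_exp,
    log_sqrt (by positivity)]
  ring

lemma rnDeriv_gaussianReal_gaussianReal (μ₁ μ₂ : ℝ) (v₁ : ℝ≥0) {v₂ : ℝ≥0} (hv₂ : v₂ ≠ 0) :
    (gaussianReal μ₁ v₁).rnDeriv (gaussianReal μ₂ v₂)
      =ᵐ[volume] fun x ↦ (gaussianPDF μ₂ v₂ x)⁻¹ * gaussianPDF μ₁ v₁ x := by
  rw [gaussianReal_of_var_ne_zero μ₂ hv₂]
  filter_upwards [Measure.rnDeriv_withDensity_right (gaussianReal μ₁ v₁) volume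
      (measurable_gaussianPDF μ₂ v₂).aemeasurable
      (ae_of_all _ fun x ↦ (gaussianPDF_pos μ₂ hv₂ x).ne') (ae_of_all _ fun _ ↦ gaussianPDF_ne_top),
    rnDeriv_gaussianReal μ₁ v₁] with x hx hx'
  rw [hx, hx']

lemma log_rnDeriv_gaussianReal_gaussianReal (μ₁ μ₂ : ℝ) {v₁ v₂ : ℝ≥0} (hv₁ : v₁ ≠ 0)
    (hv₂ : v₂ ≠ 0) :
    (fun x ↦ log ((gaussianReal μ₁ v₁).rnDeriv (gaussianReal μ₂ v₂) x).toReal)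
      =ᵐ[gaussianReal μ₁ v₁]
        fun x ↦ log (v₂ / v₁) / 2 + (x - μ₂) ^ 2 / (2 * v₂) - (x - μ₁) ^ 2 / (2 * v₁) := by
  filter_upwards [(gaussianReal_absolutelyContinuous μ₁ hv₁).ae_le
    (rnDeriv_gaussianReal_gaussianReal μ₁ μ₂ v₁ hv₂)] with x hx
  have hv₁' : (0 : ℝ) < v₁ := by positivity
  have hv₂' : (0 : ℝ) < v₂ := by positivity
  rw [hx, ENNReal.toReal_mul, ENNReal.toReal_inv, toReal_gaussianPDF, toReal_gaussianPDF,
    log_mul (inv_ne_zero (gaussianPDFReal_pos _ _ _ hv₂).ne') (gaussianPDFReal_pos _ _ _ hv₁).ne',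
    log_inv, log_gaussianPDFReal μ₁ hv₁, log_gaussianPDFReal μ₂ hv₂, log_div hv₂'.ne' hv₁'.ne',
    log_mul (by positivity) hv₁'.ne', log_mul (by positivity) hv₂'.ne']
  ring

lemma integrable_sq_sub_gaussianReal (μ m : ℝ) (v : ℝ≥0) :
    Integrable (fun x ↦ (x - m) ^ 2) (gaussianReal μ v) :=
  ((memLp_id_gaussianReal 2).sub (memLp_const m)).integrable_sq

lemma klDiv_gaussianReal (μ₁ μ₂ : ℝ) {v₁ v₂ : ℝ≥0} (hv₁ : v₁ ≠ 0) (hv₂ : v₂ ≠ 0) :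
    klDiv (gaussianReal μ₁ v₁) (gaussianReal μ₂ v₂)
      = (log (v₂ / v₁) + (v₁ + (μ₁ - μ₂) ^ 2) / v₂ - 1) / 2 := by
  have hv₁' : (v₁ : ℝ) ≠ 0 := by positivity
  have h₁ := (integrable_sq_sub_gaussianReal μ₁ μ₁ v₁).div_const (2 * v₁)
  have h₂ := (integrable_sq_sub_gaussianReal μ₁ μ₂ v₁).div_const (2 * v₂)
  have h₀ : Integrable (fun x ↦ log (v₂ / v₁) / 2 + (x - μ₂) ^ 2 / (2 * v₂))
      (gaussianReal μ₁ v₁) := (integrable_const _).add h₂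
  rw [klDiv, integral_congr_ae (log_rnDeriv_gaussianReal_gaussianReal μ₁ μ₂ hv₁ hv₂),
    integral_sub h₀ h₁, integral_add (integrable_const _) h₂, integral_const, probReal_univ,
    one_smul, integral_div, integral_div, integral_sq_sub_gaussianReal,
    integral_sq_sub_gaussianReal, sub_self]
  field_simp
  ring

lemma klDiv_gaussianReal_le (μ : ℝ) {v w : ℝ≥0} (hv : v ≠ 0) (hvw : v ≤ w) :
    klDiv (gaussianReal μ v) (gaussianReal μ w) ≤ ((w : ℝ) - v) ^ 2 / (4 * v ^ 2) := by
  have hv' : (0 : ℝ) < v := by positivity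
  have hx : 1 ≤ (w : ℝ) / v := (one_le_div hv').mpr hvw
  rw [klDiv_gaussianReal μ μ hv (ne_bot_of_le_ne_bot hv hvw)]
  calc (log (w / v) + (v + (μ - μ) ^ 2) / w - 1) / 2
      = (log (w / v) + ((w : ℝ) / v)⁻¹ - 1) / 2 := by rw [sub_self, inv_div]; ring
    _ ≤ ((w / v - 1) ^ 2 / 2) / 2 := by gcongr; exact log_add_inv_sub_one_le hx
    _ = ((w : ℝ) - v) ^ 2 / (4 * v ^ 2) := by field_simp; ring

theorem stmt_2_general (σ P : ℝ) (hσ : 0 < σ) (hP0 : 0 ≤ P) :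
    klDiv (gaussianReal 0 (σ ^ 2).toNNReal) (gaussianReal 0 (σ ^ 2 + P).toNNReal)
      ≤ P ^ 2 / (4 * σ ^ 4) := by
  have hv : 0 < σ ^ 2 := by positivity
  have hw : 0 ≤ σ ^ 2 + P := by positivity
  convert klDiv_gaussianReal_le 0 (v := (σ ^ 2).toNNReal) (w := (σ ^ 2 + P).toNNReal)
    (by simpa using hσ.ne') (by gcongr; linarith) using 1
  rw [Real.coe_toNNReal _ hv.le, Real.coe_toNNReal _ hw]
  ring

/-- For `σ > 0` and `0 ≤ P < σ²`, the Kullback–Leibler divergence between the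
centered real Gaussian of variance `σ²` and the centered real Gaussian of
variance `σ² + P` satisfies `D(N(0,σ²) ‖ N(0,σ²+P)) ≤ P²/(4σ⁴)`. -/
theorem stmt_2 (σ P : ℝ) (hσ : 0 < σ) (hP0 : 0 ≤ P) (hP : P < σ ^ 2) :
    klDiv (gaussianReal 0 (σ ^ 2).toNNReal) (gaussianReal 0 (σ ^ 2 + P).toNNReal)
      ≤ P ^ 2 / (4 * σ ^ 4) :=
  stmt_2_general σ P hσ hP0
end

section
/- Let P and Q be probability measures on a measurable space, and let P^⊗n and Q^⊗n denote their n-fold product measures. Then the total variation distance satisfies TV(P^⊗n, Q^⊗n) ≤ √( n·D(P‖Q) / 2 ). -/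
/-!
Pinsker's inequality `|P(A) - Q(A)| ≤ √(D(P‖Q)/2)` comes from the elementary bound
`3 (t - 1)² ≤ (2t + 4) (t log t - t + 1)` for `t ≥ 0`: applied to the density `g = dP/dQ` and
combined with AM-GM it gives `2 |P(A) - Q(A)| ≤ ∫ |g - 1| dQ ≤ ε + D(P‖Q)/(2ε)` for every `ε > 0`.
For the products, `P^⊗n` has density `x ↦ ∏ᵢ g(xᵢ)` with respect to `Q^⊗n`, so its log-likelihood
ratio is `∑ᵢ log g(xᵢ)` and each summand has `P^⊗n`-mean `D(P‖Q)`; hence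
`D(P^⊗n‖Q^⊗n) = n D(P‖Q)`.
-/

open MeasureTheory ProbabilityTheory Real

/-- The total variation distance between two measures: the supremum over
measurable sets `A` of `|P(A) − Q(A)|`. -/
noncomputable def tvDist {α : Type*} [MeasurableSpace α] (P Q : Measure α) : ℝ :=
  ⨆ A : {s : Set α // MeasurableSet s}, |(P A.1).toReal - (Q A.1).toReal|

namespace Real

open Set in
theorem monotoneOn_add_one_mul_log_sub :
    MonotoneOn (fun t => (t + 1) * log t - 2 * (t - 1)) (Ioi 0) := by
  have hderiv : ∀ t ∈ Ioi (0 : ℝ),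
      HasDerivAt (fun t => (t + 1) * log t - 2 * (t - 1)) (log t + t⁻¹ - 1) t := by
    intro t (ht : 0 < t)
    have := (((hasDerivAt_id t).add_const 1).mul (hasDerivAt_log ht.ne')).sub
      (((hasDerivAt_id t).sub_const 1).const_mul 2)
    exact this.congr_deriv (by simp only [id]; field_simp; ring)
  refine monotoneOn_of_hasDerivWithinAt_nonneg (convex_Ioi 0)
    (fun t ht => (hderiv t ht).continuousAt.continuousWithinAt)
    (fun t ht => (hderiv t (interior_subset ht)).hasDerivWithinAt) fun t ht => ?_
  rw [interior_Ioi] at ht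
  linarith [one_sub_inv_le_log_of_pos (mem_Ioi.mp ht)]

theorem le_sqrt_of_forall_two_mul_le {x K : ℝ} (h : ∀ ε > 0, 2 * x ≤ ε + K / (2 * ε)) :
    x ≤ √(K / 2) := by
  rcases le_or_gt x 0 with hx | hx
  · exact hx.trans (sqrt_nonneg _)
  have hxK := h x hx
  rw [le_sqrt' hx]
  have : x ≤ K / (2 * x) := by linarith
  rw [le_div_iff₀ (by positivity)] at this
  linarith

end Real

namespace MeasureTheory

theorem two_mul_abs_setIntegral_le_integral_abs {α : Type*} [MeasurableSpace α] {μ : Measure α}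
    {f : α → ℝ} (hf : Integrable f μ) (hf0 : ∫ x, f x ∂μ = 0) {A : Set α}
    (hA : MeasurableSet A) :
    2 * |∫ x in A, f x ∂μ| ≤ ∫ x, |f x| ∂μ := by
  have hcompl : ∫ x in Aᶜ, f x ∂μ = -∫ x in A, f x ∂μ := by
    linarith [integral_add_compl hA hf]
  have hA_le : |∫ x in A, f x ∂μ| ≤ ∫ x in A, |f x| ∂μ := abs_integral_le_integral_abs
  have hAc_le : |∫ x in Aᶜ, f x ∂μ| ≤ ∫ x in Aᶜ, |f x| ∂μ := abs_integral_le_integral_abs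
  rw [hcompl, abs_neg] at hAc_le
  linarith [integral_add_compl hA hf.abs]

end MeasureTheory

namespace InformationTheory

open Set

theorem three_mul_sq_sub_one_le_mul_klFun {t : ℝ} (ht : 0 ≤ t) :
    3 * (t - 1) ^ 2 ≤ (2 * t + 4) * klFun t := by
  set g : ℝ → ℝ := fun t => (2 * t + 4) * klFun t - 3 * (t - 1) ^ 2
  have hg : ∀ t ∈ Ioi (0 : ℝ), HasDerivAt g (4 * ((t + 1) * log t - 2 * (t - 1))) t := by
    intro t (ht : 0 < t)
    have := (((hasDerivAt_id t).const_mul 2).add_const 4).mul (hasDerivAt_klFun ht.ne')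
      |>.sub ((((hasDerivAt_id t).sub_const 1).pow 2).const_mul 3)
    exact this.congr_deriv (by simp only [klFun_apply, id]; ring)
  rcases ht.eq_or_lt with rfl | ht
  · norm_num [klFun_zero]
  have hmin : IsMinOn g (Ioi 0) 1 := by
    have h1 : (1 : ℝ) ∈ Ioi 0 := mem_Ioi.mpr one_pos
    have hIoi : ∀ t ∈ Ioi (1 : ℝ), t ∈ Ioi 0 := fun t ht => mem_Ioi.mpr (zero_lt_one.trans ht)
    refine isMinOn_Ioi_of_deriv (hg 1 h1).continuousAt
      (fun t ht => (hg t ht.1).differentiableAt.differentiableWithinAt)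
      (fun t ht => (hg t (hIoi t ht)).differentiableAt.differentiableWithinAt)
      (fun t ht => ?_) (fun t ht => ?_)
    · rw [(hg t ht.1).deriv]
      linarith [monotoneOn_add_one_mul_log_sub ht.1 h1 ht.2.le, log_one]
    · have ht0 := hIoi t ht
      rw [(hg t ht0).deriv]
      linarith [monotoneOn_add_one_mul_log_sub h1 ht0 (le_of_lt ht), log_one]
  have h := hmin (mem_Ioi.mpr ht)
  change g 1 ≤ g t at h
  simp only [g, klFun_one] at h
  linarith

theorem abs_sub_one_le_add_klFun {t ε : ℝ} (ht : 0 ≤ t) (hε : 0 < ε) :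
    |t - 1| ≤ ε * (t + 2) / 3 + klFun t / (2 * ε) := by
  have hA : 0 ≤ ε * (t + 2) / 3 := by positivity
  have hB : 0 ≤ klFun t / (2 * ε) := div_nonneg (klFun_nonneg ht) (by positivity)
  have hAB : (t - 1) ^ 2 ≤ 4 * (ε * (t + 2) / 3) * (klFun t / (2 * ε)) := by
    have h := three_mul_sq_sub_one_le_mul_klFun ht
    calc (t - 1) ^ 2 ≤ (2 * t + 4) * klFun t / 3 := by linarith
      _ = _ := by field_simp; ring
  exact abs_le_of_sq_le_sq (by nlinarith [sq_nonneg (ε * (t + 2) / 3 - klFun t / (2 * ε))])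
    (add_nonneg hA hB)

theorem abs_measureReal_sub_le_sqrt_integral_llr {α : Type*} [MeasurableSpace α]
    {μ ν : Measure α} [IsProbabilityMeasure μ] [IsProbabilityMeasure ν] (hμν : μ ≪ ν)
    (h_int : Integrable (llr μ ν) μ) {A : Set α} (hA : MeasurableSet A) :
    |μ.real A - ν.real A| ≤ √((∫ x, llr μ ν x ∂μ) / 2) := by
  set g : α → ℝ := fun x => (μ.rnDeriv ν x).toReal
  have hg_int : Integrable g ν := Measure.integrable_toReal_rnDeriv
  have hg_one : ∫ x, g x ∂ν = 1 := by
    simp [g, Measure.integral_toReal_rnDeriv hμν]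
  have hkl_int : Integrable (fun x => klFun (g x)) ν :=
    (integrable_klFun_rnDeriv_iff hμν).mpr h_int
  have hkl : ∫ x, klFun (g x) ∂ν = ∫ x, llr μ ν x ∂μ := by
    simp [g, integral_klFun_rnDeriv hμν h_int]
  have hdiff : μ.real A - ν.real A = ∫ x in A, (g x - 1) ∂ν := by
    rw [integral_sub hg_int.integrableOn (integrable_const 1),
      Measure.setIntegral_toReal_rnDeriv hμν]
    simp
  refine le_sqrt_of_forall_two_mul_le fun ε hε => ?_
  have hg2_int : Integrable (fun x => g x + 2) ν := hg_int.add (integrable_const 2)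
  have hlin_int : Integrable (fun x => ε * (g x + 2) / 3) ν := (hg2_int.const_mul ε).div_const 3
  calc 2 * |μ.real A - ν.real A|
      ≤ ∫ x, |g x - 1| ∂ν := by
        rw [hdiff]
        refine two_mul_abs_setIntegral_le_integral_abs (hg_int.sub (integrable_const 1)) ?_ hA
        simp [integral_sub hg_int (integrable_const 1), hg_one]
    _ ≤ ∫ x, (ε * (g x + 2) / 3 + klFun (g x) / (2 * ε)) ∂ν :=
        integral_mono (hg_int.sub (integrable_const 1)).abs (hlin_int.add (hkl_int.div_const _))
          fun x => abs_sub_one_le_add_klFun ENNReal.toReal_nonneg hε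
    _ = ε + (∫ x, llr μ ν x ∂μ) / (2 * ε) := by
        rw [integral_add hlin_int (hkl_int.div_const _), integral_div, integral_div,
          integral_const_mul, integral_add hg_int (integrable_const 2), hg_one, hkl]
        simp only [integral_const, probReal_univ, smul_eq_mul, one_mul, add_left_inj]
        ring

end InformationTheory

namespace MeasureTheory

variable {ι : Type*} [Fintype ι] {α : ι → Type*} [∀ i, MeasurableSpace (α i)]
  {μ ν : ∀ i, Measure (α i)}

namespace Measure

theorem pi_eq_withDensity_prod_rnDeriv [∀ i, SigmaFinite (μ i)]
    [∀ i, IsProbabilityMeasure (ν i)] (h : ∀ i, μ i ≪ ν i) :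
    Measure.pi μ = (Measure.pi ν).withDensity fun x => ∏ i, (μ i).rnDeriv (ν i) (x i) := by
  refine pi_eq fun s hs => ?_
  rw [withDensity_apply _ (.univ_pi hs), ← lintegral_indicator (.univ_pi hs)]
  have hind : (Set.univ.pi s).indicator (fun x => ∏ i, (μ i).rnDeriv (ν i) (x i))
      = fun x => ∏ i, (s i).indicator ((μ i).rnDeriv (ν i)) (x i) := by
    classical
    funext x
    simp only [Set.indicator_apply, Set.mem_univ_pi, Finset.prod_ite_zero, Finset.mem_univ,
      forall_const]
  rw [hind, lintegral_prod_eq_prod_lintegral_of_indepFun Finset.univ _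
    (iIndepFun_pi fun i => ((measurable_rnDeriv _ _).indicator (hs i)).aemeasurable)
    fun i => ((measurable_rnDeriv _ _).indicator (hs i)).comp (measurable_pi_apply i)]
  refine Finset.prod_congr rfl fun i _ => ?_
  rw [(measurePreserving_eval ν i).lintegral_comp ((measurable_rnDeriv _ _).indicator (hs i)),
    lintegral_indicator (hs i), setLIntegral_rnDeriv (h i)]

theorem absolutelyContinuous_pi [∀ i, SigmaFinite (μ i)] [∀ i, IsProbabilityMeasure (ν i)]
    (h : ∀ i, μ i ≪ ν i) : Measure.pi μ ≪ Measure.pi ν := by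
  rw [pi_eq_withDensity_prod_rnDeriv h]
  exact withDensity_absolutelyContinuous _ _

theorem rnDeriv_pi [∀ i, SigmaFinite (μ i)] [∀ i, IsProbabilityMeasure (ν i)]
    (h : ∀ i, μ i ≪ ν i) :
    (Measure.pi μ).rnDeriv (Measure.pi ν) =ᵐ[Measure.pi ν]
      fun x => ∏ i, (μ i).rnDeriv (ν i) (x i) := by
  conv_lhs => rw [pi_eq_withDensity_prod_rnDeriv h]
  exact rnDeriv_withDensity _
    (Finset.measurable_prod _ fun i _ => (measurable_rnDeriv _ _).comp (measurable_pi_apply i))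

end Measure

section LogLikelihoodRatio

variable [∀ i, IsProbabilityMeasure (μ i)] [∀ i, IsProbabilityMeasure (ν i)]

theorem llr_pi (h : ∀ i, μ i ≪ ν i) :
    llr (Measure.pi μ) (Measure.pi ν) =ᵐ[Measure.pi μ] fun x => ∑ i, llr (μ i) (ν i) (x i) := by
  have hpos : ∀ᵐ x ∂Measure.pi μ, ∀ i, (μ i).rnDeriv (ν i) (x i) ≠ 0 ∧
      (μ i).rnDeriv (ν i) (x i) ≠ ⊤ := by
    refine ae_all_iff.mpr fun i => (measurePreserving_eval μ i).quasiMeasurePreserving.ae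
      (p := fun a => (μ i).rnDeriv (ν i) a ≠ 0 ∧ (μ i).rnDeriv (ν i) a ≠ ⊤) ?_
    filter_upwards [Measure.rnDeriv_pos (h i),
      (h i).ae_le (Measure.rnDeriv_ne_top (μ i) (ν i))] with a ha ha'
    exact ⟨ha.ne', ha'⟩
  filter_upwards [(Measure.absolutelyContinuous_pi h).ae_le (Measure.rnDeriv_pi h), hpos]
    with x hx hpos
  simp only [llr_def, hx, ENNReal.toReal_prod]
  exact log_prod fun i _ => (ENNReal.toReal_pos (hpos i).1 (hpos i).2).ne'

theorem integrable_llr_pi (h : ∀ i, μ i ≪ ν i)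
    (h_int : ∀ i, Integrable (llr (μ i) (ν i)) (μ i)) :
    Integrable (llr (Measure.pi μ) (Measure.pi ν)) (Measure.pi μ) :=
  (integrable_finsetSum _ fun i _ => integrable_comp_eval (h_int i)).congr (llr_pi h).symm

theorem integral_llr_pi (h : ∀ i, μ i ≪ ν i)
    (h_int : ∀ i, Integrable (llr (μ i) (ν i)) (μ i)) :
    ∫ x, llr (Measure.pi μ) (Measure.pi ν) x ∂Measure.pi μ = ∑ i, ∫ x, llr (μ i) (ν i) x ∂μ i := by
  rw [integral_congr_ae (llr_pi h),
    integral_finsetSum _ fun i _ => integrable_comp_eval (h_int i)]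
  exact Finset.sum_congr rfl fun i _ =>
    integral_comp_eval (measurable_llr _ _).aestronglyMeasurable

end LogLikelihoodRatio

end MeasureTheory

/-- Let `P` and `Q` be probability measures, with `P ≪ Q` and the
log-likelihood ratio `P`-integrable (so that the Kullback–Leibler divergence
`D(P‖Q)` is finite and given by `∫ log(dP/dQ) dP`).  Then the total variation
distance between the `n`-fold products satisfies
`TV(P^⊗n, Q^⊗n) ≤ √(n·D(P‖Q)/2)`. -/
theorem stmt_3 {α : Type*} [MeasurableSpace α] (P Q : Measure α)
    [IsProbabilityMeasure P] [IsProbabilityMeasure Q] (n : ℕ)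
    (hac : P ≪ Q)
    (hint : Integrable (fun x => Real.log ((P.rnDeriv Q) x).toReal) P) :
    tvDist (Measure.pi fun _ : Fin n => P) (Measure.pi fun _ : Fin n => Q)
      ≤ Real.sqrt (n * klDiv P Q / 2) := by
  have hkl : ∫ x, llr (Measure.pi fun _ : Fin n => P) (Measure.pi fun _ => Q) x
      ∂(Measure.pi fun _ => P) = n * klDiv P Q := by
    rw [integral_llr_pi (fun _ => hac) fun _ => hint]
    simp [klDiv, llr_def]
  have : Nonempty {s : Set (Fin n → α) // MeasurableSet s} := ⟨⟨∅, .empty⟩⟩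
  unfold tvDist
  refine ciSup_le fun A => ?_
  rw [← hkl]
  exact InformationTheory.abs_measureReal_sub_le_sqrt_integral_llr
    (Measure.absolutelyContinuous_pi fun _ => hac)
    (integrable_llr_pi (fun _ => hac) fun _ => hint) A.2
end

section
/- Let σ > 0, n ≥ 1, and 0 ≤ P < σ². Then the total variation distance between the n-fold product of the centered Gaussian measure of variance σ² and the n-fold product of the centered Gaussian measure of variance σ² + P satisfies TV( N(0,σ²)^⊗n , N(0,σ²+P)^⊗n ) ≤ (P/(2σ²))·√(n/2). -/
open MeasureTheory ProbabilityTheory Real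

/-!
Le Cam's inequality bounds the total variation distance between probability densities `f` and
`g` by `√(1 - ρ²)`, where `ρ = ∫ √(f g)` is their Hellinger affinity: the distance is at
most `1 - ∫ min f g`, and Cauchy–Schwarz applied to `√(f g) = √(min f g · max f g)` gives
`ρ² ≤ ∫ min f g · ∫ max f g = m (2 - m)` with `m = ∫ min f g`.
The affinity is multiplicative over product measures, and for `N(m, v)` and `N(m, w)` it equals
`√a` with `a = 2√(vw) / (v + w)`, because `√(φ_v φ_w)` is a multiple of the density of
`N(m, 2vw / (v + w))`. Hence the distance between the `n`-fold products is at most `√(1 - aⁿ)`, and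
Bernoulli's inequality together with `1 - a ≤ (w - v)² / (8 v²)` gives the bound.
-/

open scoped ENNReal NNReal

namespace MeasureTheory

theorem lintegral_fin_nat_prod_eq_prod {n : ℕ} {α : Type*} [MeasurableSpace α]
    {μ : Fin n → Measure α} [∀ i, SigmaFinite (μ i)] {f : Fin n → α → ℝ≥0∞}
    (hf : ∀ i, Measurable (f i)) :
    ∫⁻ x, ∏ i, f i (x i) ∂(Measure.pi μ) = ∏ i, ∫⁻ x, f i x ∂(μ i) := by
  induction n with
  | zero => simp
  | succ n ih =>
      calc
        _ = ∫⁻ x : α × (Fin n → α),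
            f 0 x.1 * ∏ i : Fin n, f (Fin.succ i) (x.2 i)
            ∂((μ 0).prod (Measure.pi (fun i ↦ μ i.succ))) := by
          rw [← ((measurePreserving_piFinSuccAbove μ 0).symm).lintegral_comp_emb
            (MeasurableEquiv.measurableEmbedding _)]
          simp_rw [MeasurableEquiv.piFinSuccAbove_symm_apply, Fin.insertNthEquiv,
            Fin.prod_univ_succ, Fin.insertNth_zero, Equiv.coe_fn_mk, Fin.cons_succ,
            Fin.zero_succAbove, cast_eq, Fin.cons_zero]
        _ = (∫⁻ x, f 0 x ∂μ 0) * ∏ i : Fin n, ∫⁻ x, f i.succ x ∂(μ i.succ) := by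
          have hrest : Measurable fun y : Fin n → α ↦ ∏ i, f i.succ (y i) :=
            Finset.measurable_prod _ fun i _ ↦ (hf i.succ).comp (measurable_pi_apply i)
          rw [← ih fun i ↦ hf i.succ, ← lintegral_prod_mul (hf 0).aemeasurable hrest.aemeasurable]
        _ = ∏ i, ∫⁻ x, f i x ∂(μ i) := by rw [Fin.prod_univ_succ]

theorem lintegral_fintype_prod_eq_prod {ι α : Type*} [Fintype ι] [MeasurableSpace α]
    {μ : ι → Measure α} [∀ i, SigmaFinite (μ i)] {f : ι → α → ℝ≥0∞}
    (hf : ∀ i, Measurable (f i)) :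
    ∫⁻ x, ∏ i, f i (x i) ∂(Measure.pi μ) = ∏ i, ∫⁻ x, f i x ∂(μ i) := by
  let e := (Fintype.equivFin ι).symm
  rw [← (measurePreserving_piCongrLeft μ e).lintegral_comp_emb
    (MeasurableEquiv.measurableEmbedding _)]
  simp_rw [← e.prod_comp, MeasurableEquiv.coe_piCongrLeft, Equiv.piCongrLeft_apply_apply]
  exact lintegral_fin_nat_prod_eq_prod fun i ↦ hf (e i)

theorem Measure.pi_eq_withDensity_prod {ι α : Type*} [Fintype ι] [MeasurableSpace α]
    {μ ν : ι → Measure α} [∀ i, SigmaFinite (μ i)] [∀ i, SigmaFinite (ν i)]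
    {f : ι → α → ℝ≥0∞} (hf : ∀ i, Measurable (f i)) (hν : ∀ i, ν i = (μ i).withDensity (f i)) :
    Measure.pi ν = (Measure.pi μ).withDensity fun x ↦ ∏ i, f i (x i) := by
  refine Measure.pi_eq fun s hs ↦ ?_
  rw [withDensity_apply _ (MeasurableSet.univ_pi hs), Measure.restrict_pi_pi,
    lintegral_fintype_prod_eq_prod hf]
  exact Finset.prod_congr rfl fun i _ ↦ by rw [hν, withDensity_apply _ (hs i)]

theorem lintegral_sqrt_prod_mul_prod {ι α : Type*} [Fintype ι] [MeasurableSpace α]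
    {μ : ι → Measure α} [∀ i, SigmaFinite (μ i)] {f g : ι → α → ℝ≥0∞}
    (hf : ∀ i, Measurable (f i)) (hg : ∀ i, Measurable (g i)) :
    ∫⁻ x, ((∏ i, f i (x i)) * ∏ i, g i (x i)) ^ (1 / 2 : ℝ) ∂(Measure.pi μ) =
      ∏ i, ∫⁻ y, (f i y * g i y) ^ (1 / 2 : ℝ) ∂(μ i) := by
  simp_rw [← Finset.prod_mul_distrib,
    ← ENNReal.prod_rpow_of_nonneg (by norm_num : (0 : ℝ) ≤ 1 / 2)]
  exact lintegral_fintype_prod_eq_prod fun i ↦ ((hf i).mul (hg i)).pow_const _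

variable {α : Type*} [MeasurableSpace α] {μ : Measure α} {f g : α → ℝ≥0∞}

theorem lintegral_min_add_lintegral_max (hf : Measurable f) (hg : Measurable g) :
    ∫⁻ x, min (f x) (g x) ∂μ + ∫⁻ x, max (f x) (g x) ∂μ = ∫⁻ x, f x ∂μ + ∫⁻ x, g x ∂μ := by
  rw [← lintegral_add_left (hf.min hg), ← lintegral_add_left hf]
  simp_rw [min_add_max]

theorem sq_lintegral_sqrt_mul_le (hf : Measurable f) (hg : Measurable g) :
    (∫⁻ x, (f x * g x) ^ (1 / 2 : ℝ) ∂μ) ^ 2 ≤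
      (∫⁻ x, min (f x) (g x) ∂μ) * ∫⁻ x, max (f x) (g x) ∂μ := by
  have hsq : ∀ y : ℝ≥0∞, (y ^ (1 / 2 : ℝ)) ^ (2 : ℝ) = y := fun y ↦ by
    rw [← ENNReal.rpow_mul]; norm_num
  have hCS := ENNReal.lintegral_mul_le_Lp_mul_Lq μ Real.HolderConjugate.two_two
    ((hf.min hg).pow_const (1 / 2 : ℝ)).aemeasurable
    ((hf.max hg).pow_const (1 / 2 : ℝ)).aemeasurable
  simp only [Pi.mul_apply, hsq, min_mul_max,
    ← ENNReal.mul_rpow_of_nonneg _ _ (by norm_num : (0 : ℝ) ≤ 1 / 2)] at hCS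
  calc (∫⁻ x, (f x * g x) ^ (1 / 2 : ℝ) ∂μ) ^ 2
      ≤ (((∫⁻ x, min (f x) (g x) ∂μ) * ∫⁻ x, max (f x) (g x) ∂μ) ^ (1 / 2 : ℝ)) ^ 2 := by
        gcongr
    _ = (∫⁻ x, min (f x) (g x) ∂μ) * ∫⁻ x, max (f x) (g x) ∂μ := by
        rw [← ENNReal.rpow_natCast, ← ENNReal.rpow_mul]; norm_num

theorem withDensity_apply_le_add_one_sub_lintegral_min (hf : Measurable f) (hg : Measurable g)
    (hf1 : ∫⁻ x, f x ∂μ = 1) {s : Set α} (hs : MeasurableSet s) :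
    μ.withDensity f s ≤ μ.withDensity g s + (1 - ∫⁻ x, min (f x) (g x) ∂μ) := by
  have hmin_le : ∀ x, min (f x) (g x) ≤ f x := fun x ↦ min_le_left _ _
  have hm1 : ∫⁻ x, min (f x) (g x) ∂μ ≤ 1 := hf1 ▸ lintegral_mono hmin_le
  have hexcess : ∫⁻ x, (f x - min (f x) (g x)) ∂μ = 1 - ∫⁻ x, min (f x) (g x) ∂μ := by
    rw [lintegral_sub (hf.min hg) (ne_top_of_le_ne_top ENNReal.one_ne_top hm1)
      (ae_of_all _ hmin_le), hf1]
  rw [withDensity_apply _ hs, withDensity_apply _ hs, ← hexcess]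
  calc ∫⁻ x in s, f x ∂μ
        = ∫⁻ x in s, (min (f x) (g x) + (f x - min (f x) (g x))) ∂μ := by
        simp_rw [add_tsub_cancel_of_le (hmin_le _)]
    _ = (∫⁻ x in s, min (f x) (g x) ∂μ) + ∫⁻ x in s, (f x - min (f x) (g x)) ∂μ :=
        lintegral_add_left (hf.min hg) _
    _ ≤ (∫⁻ x in s, g x ∂μ) + ∫⁻ x, (f x - min (f x) (g x)) ∂μ := by
        gcongr with x
        · exact min_le_right _ _
        · exact Measure.restrict_le_self

theorem toReal_withDensity_apply_sub_le (hf : Measurable f) (hg : Measurable g)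
    (hf1 : ∫⁻ x, f x ∂μ = 1) (hg1 : ∫⁻ x, g x ∂μ = 1) {s : Set α} (hs : MeasurableSet s) :
    (μ.withDensity f s).toReal - (μ.withDensity g s).toReal ≤
      1 - (∫⁻ x, min (f x) (g x) ∂μ).toReal := by
  have hm1 : ∫⁻ x, min (f x) (g x) ∂μ ≤ 1 := hf1 ▸ lintegral_mono fun x ↦ min_le_left _ _
  have hgs : μ.withDensity g s ≠ ∞ := by
    refine ne_top_of_le_ne_top ?_ (measure_mono (Set.subset_univ s))
    simp [withDensity_apply, hg1]
  have h := ENNReal.toReal_mono (by finiteness)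
    (withDensity_apply_le_add_one_sub_lintegral_min hf hg hf1 hs)
  rw [ENNReal.toReal_add hgs (by finiteness), ENNReal.toReal_sub_of_le hm1 ENNReal.one_ne_top,
    ENNReal.toReal_one] at h
  linarith

end MeasureTheory

theorem tvDist_withDensity_le {α : Type*} [MeasurableSpace α] {μ : Measure α}
    {f g : α → ℝ≥0∞} (hf : Measurable f) (hg : Measurable g)
    (hf1 : ∫⁻ x, f x ∂μ = 1) (hg1 : ∫⁻ x, g x ∂μ = 1) :
    tvDist (μ.withDensity f) (μ.withDensity g) ≤
      √(1 - (∫⁻ x, (f x * g x) ^ (1 / 2 : ℝ) ∂μ).toReal ^ 2) := by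
  set m := ∫⁻ x, min (f x) (g x) ∂μ
  set M := ∫⁻ x, max (f x) (g x) ∂μ
  have hmM : m + M = 2 := by
    rw [lintegral_min_add_lintegral_max hf hg, hf1, hg1, one_add_one_eq_two]
  have hm : m ≠ ∞ := ne_top_of_le_ne_top (by finiteness) (hmM ▸ le_self_add : m ≤ 2)
  have hM : M ≠ ∞ := ne_top_of_le_ne_top (by finiteness) (hmM ▸ le_add_self : M ≤ 2)
  have hMm : M.toReal = 2 - m.toReal := by
    rw [eq_sub_iff_add_eq', ← ENNReal.toReal_add hm hM, hmM, ENNReal.toReal_ofNat]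
  have hCS := ENNReal.toReal_mono (ENNReal.mul_ne_top hm hM)
    (sq_lintegral_sqrt_mul_le (μ := μ) hf hg)
  rw [ENNReal.toReal_pow, ENNReal.toReal_mul, hMm] at hCS
  -- `(1 - m)² = 1 - m (2 - m)`
  have hsep : 1 - m.toReal ≤ √(1 - (∫⁻ x, (f x * g x) ^ (1 / 2 : ℝ) ∂μ).toReal ^ 2) :=
    Real.le_sqrt_of_sq_le (by nlinarith)
  refine Real.iSup_le (fun s ↦ abs_sub_le_iff.mpr ⟨?_, ?_⟩) (Real.sqrt_nonneg _)
  · exact (toReal_withDensity_apply_sub_le hf hg hf1 hg1 s.2).trans hsep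
  · simp_rw [m, min_comm (f _)] at hsep
    exact (toReal_withDensity_apply_sub_le hg hf hg1 hf1 s.2).trans hsep

namespace ProbabilityTheory

theorem gaussianPDFReal_mul_gaussianPDFReal (m : ℝ) {v w : ℝ≥0} (hv : v ≠ 0) (hw : w ≠ 0)
    (x : ℝ) :
    gaussianPDFReal m v x * gaussianPDFReal m w x =
      2 * √(v * w) / (v + w) * gaussianPDFReal m (2 * v * w / (v + w)) x ^ 2 := by
  have hv' : (0 : ℝ) < v := by positivity
  have hw' : (0 : ℝ) < w := by positivity
  have hvw : √((v : ℝ) * w) ^ 2 = v * w := Real.sq_sqrt (by positivity)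
  have hs : √(2 * π * v) * √(2 * π * w) = 2 * π * √(v * w) := by
    rw [← Real.sqrt_mul (by positivity),
      show 2 * π * v * (2 * π * w) = (2 * π) ^ 2 * (v * w) by ring,
      Real.sqrt_mul (by positivity), Real.sqrt_sq (by positivity)]
  simp only [gaussianPDFReal, NNReal.coe_div, NNReal.coe_mul, NNReal.coe_add, NNReal.coe_ofNat,
    mul_pow, inv_pow, ← Real.exp_nat_mul]
  rw [Real.sq_sqrt (by positivity), mul_mul_mul_comm, ← mul_inv, hs, ← Real.exp_add]
  have hvw_pos : 0 < √((v : ℝ) * w) := by positivity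
  field_simp
  congr 1
  · nlinarith
  · congr 1; push_cast; field_simp; ring

theorem lintegral_sqrt_gaussianPDF_mul (m : ℝ) {v w : ℝ≥0} (hv : v ≠ 0) (hw : w ≠ 0) :
    ∫⁻ x, (gaussianPDF m v x * gaussianPDF m w x) ^ (1 / 2 : ℝ) =
      ENNReal.ofReal √(2 * √(v * w) / (v + w)) := by
  have hu : 2 * v * w / (v + w) ≠ 0 := by positivity
  have hpt : ∀ x, (gaussianPDF m v x * gaussianPDF m w x) ^ (1 / 2 : ℝ) =
      ENNReal.ofReal √(2 * √(v * w) / (v + w)) * gaussianPDF m (2 * v * w / (v + w)) x := by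
    intro x
    rw [gaussianPDF, gaussianPDF, gaussianPDF,
      ← ENNReal.ofReal_mul (gaussianPDFReal_nonneg _ _ _),
      ← ENNReal.ofReal_mul (Real.sqrt_nonneg _), ENNReal.ofReal_rpow_of_nonneg
        (mul_nonneg (gaussianPDFReal_nonneg _ _ _) (gaussianPDFReal_nonneg _ _ _)) (by norm_num),
      ← Real.sqrt_eq_rpow, gaussianPDFReal_mul_gaussianPDFReal m hv hw,
      Real.sqrt_mul (by positivity), Real.sqrt_sq (gaussianPDFReal_nonneg _ _ _)]
  simp_rw [hpt]
  rw [lintegral_const_mul _ (measurable_gaussianPDF _ _), lintegral_gaussianPDF_eq_one _ hu,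
    mul_one]

theorem tvDist_pi_gaussianReal_le (ι : Type*) [Fintype ι] (m : ℝ) {v w : ℝ≥0}
    (hv : v ≠ 0) (hw : w ≠ 0) :
    tvDist (Measure.pi fun _ : ι ↦ gaussianReal m v) (Measure.pi fun _ : ι ↦ gaussianReal m w) ≤
      √(1 - (2 * √(v * w) / (v + w)) ^ Fintype.card ι) := by
  have hpdf : ∀ u : ℝ≥0, u ≠ 0 → Measure.pi (fun _ : ι ↦ gaussianReal m u) =
      (Measure.pi fun _ : ι ↦ volume).withDensity fun x ↦ ∏ i, gaussianPDF m u (x i) :=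
    fun u hu ↦ Measure.pi_eq_withDensity_prod (fun _ ↦ measurable_gaussianPDF m u)
      fun _ ↦ gaussianReal_of_var_ne_zero m hu
  have hone : ∀ u : ℝ≥0, u ≠ 0 →
      ∫⁻ x, ∏ i, gaussianPDF m u (x i) ∂(Measure.pi fun _ : ι ↦ volume) = 1 := fun u hu ↦ by
    simp [lintegral_fintype_prod_eq_prod (fun _ ↦ measurable_gaussianPDF m u), hu]
  rw [hpdf v hv, hpdf w hw]
  refine (tvDist_withDensity_le (by fun_prop) (by fun_prop) (hone v hv) (hone w hw)).trans_eq
    ?_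
  rw [lintegral_sqrt_prod_mul_prod (fun _ ↦ measurable_gaussianPDF m v)
    (fun _ ↦ measurable_gaussianPDF m w)]
  simp_rw [lintegral_sqrt_gaussianPDF_mul m hv hw]
  rw [Finset.prod_const, Finset.card_univ, ← ENNReal.ofReal_pow (Real.sqrt_nonneg _),
    ENNReal.toReal_ofReal (by positivity), pow_right_comm, Real.sq_sqrt (by positivity)]

end ProbabilityTheory

theorem one_sub_two_sqrt_mul_div_add_le {v w : ℝ} (hv : 0 < v) (hvw : v ≤ w) :
    1 - 2 * √(v * w) / (v + w) ≤ (w - v) ^ 2 / (8 * v ^ 2) := by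
  obtain ⟨s, hs, rfl⟩ : ∃ s, 0 < s ∧ v = s ^ 2 :=
    ⟨√v, by positivity, (Real.sq_sqrt hv.le).symm⟩
  obtain ⟨t, ht, rfl⟩ : ∃ t, 0 < t ∧ w = t ^ 2 :=
    ⟨√w, Real.sqrt_pos.mpr (hv.trans_le hvw), (Real.sq_sqrt (hv.le.trans hvw)).symm⟩
  have hst : s ≤ t := by nlinarith
  rw [← mul_pow, Real.sqrt_sq (by positivity), one_sub_div (by positivity),
    div_le_div_iff₀ (by positivity) (by positivity)]
  have h1 : 0 ≤ (t - s) ^ 2 := sq_nonneg _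
  have h2 : 8 * (s ^ 2) ^ 2 ≤ (t + s) ^ 2 * (s ^ 2 + t ^ 2) := by
    have hsum : 4 * s ^ 2 ≤ (t + s) ^ 2 := by nlinarith
    have hsq : 2 * s ^ 2 ≤ s ^ 2 + t ^ 2 := by nlinarith
    nlinarith [mul_le_mul hsum hsq (by positivity) (by positivity)]
  nlinarith [mul_le_mul_of_nonneg_left h2 h1]

theorem one_sub_pow_le_mul_one_sub {a : ℝ} (ha : -1 ≤ a) (n : ℕ) : 1 - a ^ n ≤ n * (1 - a) := by
  have := one_add_mul_le_pow (by linarith : -2 ≤ a - 1) n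
  rw [add_sub_cancel] at this
  linarith

theorem stmt_4_general (σ P : ℝ) (hσ : 0 < σ) (n : ℕ)
    (hP0 : 0 ≤ P) :
    tvDist (Measure.pi fun _ : Fin n => gaussianReal 0 (σ ^ 2).toNNReal)
        (Measure.pi fun _ : Fin n => gaussianReal 0 (σ ^ 2 + P).toNNReal)
      ≤ (P / (2 * σ ^ 2)) * Real.sqrt (n / 2) := by
  have hσ2 : 0 < σ ^ 2 := by positivity
  have hv : (σ ^ 2).toNNReal ≠ 0 := (Real.toNNReal_pos.mpr hσ2).ne'
  have hw : (σ ^ 2 + P).toNNReal ≠ 0 := (Real.toNNReal_pos.mpr (by linarith)).ne'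
  refine (tvDist_pi_gaussianReal_le (Fin n) 0 hv hw).trans ?_
  rw [Real.coe_toNNReal _ hσ2.le, Real.coe_toNNReal _ (by linarith), Fintype.card_fin]
  have hdiff := one_sub_two_sqrt_mul_div_add_le hσ2 (le_add_of_nonneg_right hP0)
  rw [add_sub_cancel_left] at hdiff
  calc √(1 - (2 * √(σ ^ 2 * (σ ^ 2 + P)) / (σ ^ 2 + (σ ^ 2 + P))) ^ n)
      ≤ √(n * (P ^ 2 / (8 * (σ ^ 2) ^ 2))) := by
        gcongr
        refine (one_sub_pow_le_mul_one_sub ?_ n).trans (by gcongr)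
        exact neg_one_lt_zero.le.trans (by positivity)
    _ = P / (2 * σ ^ 2) * √(n / 2) := by
        rw [← Real.sqrt_sq (by positivity : 0 ≤ P / (2 * σ ^ 2)),
          ← Real.sqrt_mul (sq_nonneg _)]
        congr 1
        field_simp
        ring

/-- For `σ > 0`, `n ≥ 1` and `0 ≤ P < σ²`, the total variation distance between
the `n`-fold product of `N(0,σ²)` and the `n`-fold product of `N(0,σ²+P)`
satisfies `TV(N(0,σ²)^⊗n, N(0,σ²+P)^⊗n) ≤ (P/(2σ²))·√(n/2)`. -/
theorem stmt_4 (σ P : ℝ) (hσ : 0 < σ) (n : ℕ) (hn : 1 ≤ n)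
    (hP0 : 0 ≤ P) (hP : P < σ ^ 2) :
    tvDist (Measure.pi fun _ : Fin n => gaussianReal 0 (σ ^ 2).toNNReal)
        (Measure.pi fun _ : Fin n => gaussianReal 0 (σ ^ 2 + P).toNNReal)
      ≤ (P / (2 * σ ^ 2)) * Real.sqrt (n / 2) :=
  stmt_4_general σ P hσ n hP0
end

section
/- Let σ > 0 and 0 ≤ a < σ. Let Q_a = (1/2)·N(−a,σ²) + (1/2)·N(a,σ²) be the equal mixture of two real Gaussian measures with means ∓a and variance σ². Then the Kullback–Leibler divergence satisfies D( N(0,σ²) ‖ Q_a ) ≤ a⁴/(4σ⁴). -/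
/-!
The mixture is the centred Gaussian `P = N(0, σ²)` reweighted by the density
`exp (-a² / (2σ²)) * cosh (a x / σ²)`, so
`D(P ‖ Q_a) = a² / (2σ²) - E_P[log cosh (a X / σ²)]`.
The pointwise bound `log cosh t ≥ t² / 2 - t⁴ / 12` together with the Gaussian moments
`E X² = σ²` and `E X⁴ = 3σ⁴` then leaves exactly `a⁴ / (4σ⁴)`.
-/

open MeasureTheory ProbabilityTheory Real
open scoped ENNReal NNReal

lemma le_of_hasDerivAt_nonneg {f f' : ℝ → ℝ} (hf : ∀ x, HasDerivAt f (f' x) x)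
    (hf' : ∀ x, 0 ≤ x → 0 ≤ f' x) {t : ℝ} (ht : 0 ≤ t) : f 0 ≤ f t := by
  refine monotoneOn_of_hasDerivWithinAt_nonneg (convex_Ici 0)
    (fun x _ ↦ (hf x).continuousAt.continuousWithinAt) (fun x _ ↦ (hf x).hasDerivWithinAt)
    (fun x hx ↦ hf' x (interior_subset hx)) Set.self_mem_Ici ht ht

lemma Real.hasDerivAt_tanh (x : ℝ) : HasDerivAt tanh (1 - tanh x ^ 2) x := by
  have hcosh := (cosh_pos x).ne'
  have h : HasDerivAt (fun y ↦ sinh y / cosh y) _ x :=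
    (hasDerivAt_sinh x).div (hasDerivAt_cosh x) hcosh
  simp only [← tanh_eq_sinh_div_cosh] at h
  convert h using 1
  rw [tanh_eq_sinh_div_cosh]
  field_simp

lemma Real.hasDerivAt_log_cosh (x : ℝ) : HasDerivAt (fun y ↦ log (cosh y)) (tanh x) x := by
  simpa only [← tanh_eq_sinh_div_cosh] using (hasDerivAt_cosh x).log (cosh_pos x).ne'

lemma Real.tanh_nonneg {t : ℝ} (ht : 0 ≤ t) : 0 ≤ tanh t := by
  rw [tanh_eq_sinh_div_cosh]
  exact div_nonneg (sinh_nonneg_iff.mpr ht) (cosh_pos t).le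

lemma Real.tanh_le_self {t : ℝ} (ht : 0 ≤ t) : tanh t ≤ t := by
  have := le_of_hasDerivAt_nonneg (fun x ↦ (hasDerivAt_id x).sub (hasDerivAt_tanh x))
    (fun x _ ↦ by simp only [sub_sub_cancel]; positivity) ht
  simpa [sub_nonneg] using this

lemma Real.sub_pow_three_div_three_le_tanh {t : ℝ} (ht : 0 ≤ t) : t - t ^ 3 / 3 ≤ tanh t := by
  have := le_of_hasDerivAt_nonneg
    (fun x ↦ ((hasDerivAt_tanh x).sub (hasDerivAt_id x)).add ((hasDerivAt_pow 3 x).div_const 3))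
    (fun x hx ↦ by nlinarith [tanh_nonneg hx, tanh_le_self hx]) ht
  norm_num at this
  linarith

lemma Real.log_cosh_le (t : ℝ) : log (cosh t) ≤ t ^ 2 / 2 :=
  (log_le_iff_le_exp (cosh_pos t)).mpr (cosh_le_exp_half_sq t)

lemma Real.sq_div_two_sub_pow_four_div_twelve_le_log_cosh (t : ℝ) :
    t ^ 2 / 2 - t ^ 4 / 12 ≤ log (cosh t) := by
  wlog ht : 0 ≤ t generalizing t
  · have := this (-t) (by linarith)
    rwa [cosh_neg, neg_sq, show (-t) ^ 4 = t ^ 4 by ring] at this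
  have := le_of_hasDerivAt_nonneg
    (fun x ↦ (hasDerivAt_log_cosh x).sub
      (((hasDerivAt_pow 2 x).div_const 2).sub ((hasDerivAt_pow 4 x).div_const 12)))
    (fun x hx ↦ by nlinarith [sub_pow_three_div_three_le_tanh hx]) ht
  norm_num at this
  linarith

lemma integral_abs_rpow_mul_exp_neg_mul_sq {b q : ℝ} (hb : 0 < b) (hq : -1 < q) :
    ∫ x : ℝ, |x| ^ q * exp (-b * x ^ 2) = b ^ (-(q + 1) / 2) * Gamma ((q + 1) / 2) := by
  calc ∫ x : ℝ, |x| ^ q * exp (-b * x ^ 2)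
      = ∫ x : ℝ, (fun y : ℝ ↦ y ^ q * exp (-b * y ^ (2 : ℝ))) |x| := by
        simp only [rpow_two, sq_abs]
    _ = 2 * ∫ x in Set.Ioi 0, x ^ q * exp (-b * x ^ (2 : ℝ)) :=
        integral_comp_abs (f := fun y ↦ y ^ q * exp (-b * y ^ (2 : ℝ)))
    _ = _ := by
        rw [integral_rpow_mul_exp_neg_mul_rpow two_pos hq hb]
        ring

lemma integrable_pow_gaussianReal (μ : ℝ) (v : ℝ≥0) (n : ℕ) :
    Integrable (fun x ↦ x ^ n) (gaussianReal μ v) :=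
  (memLp_id_gaussianReal n).integrable_norm_pow'.mono' (by fun_prop)
    (ae_of_all _ fun x ↦ by simp)

lemma integral_pow_two_mul_gaussianReal {v : ℝ≥0} (hv : v ≠ 0) (n : ℕ) :
    ∫ x, x ^ (2 * n) ∂gaussianReal 0 v = (2 * v) ^ n * Gamma (n + 1 / 2) / √π := by
  have h2v : (0 : ℝ) < 2 * v := by positivity
  have hpow :
      (2 * (v : ℝ))⁻¹ ^ (-((2 * n : ℕ) + 1 : ℝ) / 2) = (2 * v) ^ n * √(2 * v) := by
    rw [inv_rpow h2v.le, ← rpow_neg h2v.le, neg_div, neg_neg, sqrt_eq_rpow, ← rpow_natCast,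
      ← rpow_add h2v]
    push_cast
    ring_nf
  have hsqrt : √(2 * π * v) = √π * √(2 * v) := by
    rw [mul_assoc, mul_left_comm, sqrt_mul pi_pos.le]
  calc ∫ x, x ^ (2 * n) ∂gaussianReal 0 v
      = (√(2 * π * v))⁻¹ *
          ∫ x : ℝ, |x| ^ ((2 * n : ℕ) : ℝ) * exp (-(2 * (v : ℝ))⁻¹ * x ^ 2) := by
        rw [integral_gaussianReal_eq_integral_smul hv, ← integral_const_mul]
        congr 1 with x
        rw [gaussianPDFReal, smul_eq_mul, rpow_natCast, (even_two_mul n).pow_abs]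
        ring_nf
    _ = (2 * v) ^ n * Gamma (n + 1 / 2) / √π := by
        rw [integral_abs_rpow_mul_exp_neg_mul_sq (by positivity)
          (by linarith [n.cast_nonneg (α := ℝ)]), hpow, hsqrt]
        push_cast
        field_simp

lemma integral_sq_gaussianReal {v : ℝ≥0} (hv : v ≠ 0) :
    ∫ x, x ^ 2 ∂gaussianReal 0 v = v := by
  have h := integral_pow_two_mul_gaussianReal hv 1
  rw [Nat.cast_one, add_comm, Gamma_add_one one_half_pos.ne', Gamma_one_half_eq] at h
  rw [h]
  field_simp

lemma integral_pow_four_gaussianReal {v : ℝ≥0} (hv : v ≠ 0) :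
    ∫ x, x ^ 4 ∂gaussianReal 0 v = 3 * (v : ℝ) ^ 2 := by
  have h := integral_pow_two_mul_gaussianReal hv 2
  rw [show ((2 : ℕ) : ℝ) + 1 / 2 = 1 / 2 + 1 + 1 by norm_num, Gamma_add_one (by norm_num),
    Gamma_add_one one_half_pos.ne', Gamma_one_half_eq] at h
  rw [h]
  field_simp
  ring

lemma klDiv_withDensity_ofReal {α : Type*} [MeasurableSpace α] (P : Measure α) [SigmaFinite P]
    {g : α → ℝ} (hg : Measurable g) (hg_pos : ∀ x, 0 < g x) :
    klDiv P (P.withDensity fun x ↦ ENNReal.ofReal (g x)) = -∫ x, log (g x) ∂P := by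
  have hrn := Measure.rnDeriv_withDensity_right P P hg.ennreal_ofReal.aemeasurable
    (ae_of_all _ fun x ↦ ENNReal.ofReal_pos.mpr (hg_pos x) |>.ne') (ae_of_all _ fun x ↦ by simp)
  rw [klDiv, ← integral_neg]
  refine integral_congr_ae ?_
  filter_upwards [hrn, Measure.rnDeriv_self P] with x hx hself
  rw [hx, hself, mul_one, ENNReal.toReal_inv, ENNReal.toReal_ofReal (hg_pos x).le,
    log_inv]

lemma half_gaussianPDFReal_neg_add_half_gaussianPDFReal {v : ℝ≥0} (hv : v ≠ 0) (a x : ℝ) :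
    1 / 2 * gaussianPDFReal (-a) v x + 1 / 2 * gaussianPDFReal a v x
      = gaussianPDFReal 0 v x * (exp (-(a ^ 2 / (2 * v))) * cosh (a / v * x)) := by
  have hv' : (v : ℝ) ≠ 0 := by positivity
  simp only [gaussianPDFReal, sub_zero, cosh_eq]
  rw [show -(x - -a) ^ 2 / (2 * (v : ℝ)) = -x ^ 2 / (2 * v) + (-(a ^ 2 / (2 * v)) + -(a / v * x))
      by field_simp; ring,
    show -(x - a) ^ 2 / (2 * (v : ℝ)) = -x ^ 2 / (2 * v) + (-(a ^ 2 / (2 * v)) + a / v * x)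
      by field_simp; ring]
  simp only [exp_add]
  ring

lemma half_smul_gaussianReal_neg_add_half_smul_gaussianReal {v : ℝ≥0} (hv : v ≠ 0) (a : ℝ) :
    (1 / 2 : ℝ≥0∞) • gaussianReal (-a) v + (1 / 2 : ℝ≥0∞) • gaussianReal a v
      = (gaussianReal 0 v).withDensity
          fun x ↦ ENNReal.ofReal (exp (-(a ^ 2 / (2 * v))) * cosh (a / v * x)) := by
  rw [gaussianReal_of_var_ne_zero _ hv, gaussianReal_of_var_ne_zero _ hv,
    gaussianReal_of_var_ne_zero _ hv,
    ← withDensity_mul _ (measurable_gaussianPDF 0 v) (by fun_prop),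
    ← withDensity_smul _ (measurable_gaussianPDF (-a) v),
    ← withDensity_smul _ (measurable_gaussianPDF a v),
    ← withDensity_add_left ((measurable_gaussianPDF (-a) v).const_smul _)]
  congr 1 with x
  simp only [Pi.add_apply, Pi.smul_apply, Pi.mul_apply, gaussianPDF, smul_eq_mul]
  rw [← ENNReal.ofReal_mul (gaussianPDFReal_nonneg _ _ _),
    ← half_gaussianPDFReal_neg_add_half_gaussianPDFReal hv,
    ENNReal.ofReal_add (mul_nonneg (by norm_num) (gaussianPDFReal_nonneg _ _ _))
      (mul_nonneg (by norm_num) (gaussianPDFReal_nonneg _ _ _)),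
    ENNReal.ofReal_mul (by norm_num), ENNReal.ofReal_mul (by norm_num),
    ENNReal.ofReal_div_of_pos two_pos]
  simp

lemma integrable_log_cosh_mul_gaussianReal (μ : ℝ) (v : ℝ≥0) (c : ℝ) :
    Integrable (fun x ↦ log (cosh (c * x))) (gaussianReal μ v) := by
  refine ((integrable_pow_gaussianReal μ v 2).const_mul (c ^ 2 / 2)).mono'
    (by fun_prop : Measurable fun x ↦ log (cosh (c * x))).aestronglyMeasurable
    (ae_of_all _ fun x ↦ ?_)
  rw [norm_of_nonneg (log_nonneg (one_le_cosh _))]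
  linarith [log_cosh_le (c * x), mul_pow c x 2]

lemma klDiv_gaussianReal_half_smul_neg_add_half_smul {v : ℝ≥0} (hv : v ≠ 0) (a : ℝ) :
    klDiv (gaussianReal 0 v)
        ((1 / 2 : ℝ≥0∞) • gaussianReal (-a) v + (1 / 2 : ℝ≥0∞) • gaussianReal a v)
      = a ^ 2 / (2 * v) - ∫ x, log (cosh (a / v * x)) ∂gaussianReal 0 v := by
  rw [half_smul_gaussianReal_neg_add_half_smul_gaussianReal hv,
    klDiv_withDensity_ofReal _ (by fun_prop) fun x ↦ by positivity]
  simp only [log_mul (exp_pos _).ne' (cosh_pos _).ne', log_exp]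
  rw [integral_add (integrable_const _) (integrable_log_cosh_mul_gaussianReal 0 v _),
    integral_const, probReal_univ, one_smul]
  ring

lemma integral_log_cosh_mul_gaussianReal_ge {v : ℝ≥0} (hv : v ≠ 0) (c : ℝ) :
    c ^ 2 * v / 2 - c ^ 4 * v ^ 2 / 4 ≤ ∫ x, log (cosh (c * x)) ∂gaussianReal 0 v := by
  have h2 := (integrable_pow_gaussianReal 0 v 2).const_mul (c ^ 2 / 2)
  have h4 := (integrable_pow_gaussianReal 0 v 4).const_mul (c ^ 4 / 12)
  calc c ^ 2 * v / 2 - c ^ 4 * v ^ 2 / 4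
      = ∫ x, c ^ 2 / 2 * x ^ 2 - c ^ 4 / 12 * x ^ 4 ∂gaussianReal 0 v := by
        rw [integral_sub h2 h4, integral_const_mul, integral_const_mul,
          integral_sq_gaussianReal hv, integral_pow_four_gaussianReal hv]
        ring
    _ ≤ ∫ x, log (cosh (c * x)) ∂gaussianReal 0 v :=
        integral_mono (h2.sub h4) (integrable_log_cosh_mul_gaussianReal 0 v c) fun x ↦ by
          have := sq_div_two_sub_pow_four_div_twelve_le_log_cosh (c * x)
          dsimp only
          linarith [mul_pow c x 2, mul_pow c x 4]

theorem stmt_6_general (σ a : ℝ) (hσ : 0 < σ) :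
    klDiv (gaussianReal 0 (σ ^ 2).toNNReal)
        ((1 / 2 : ℝ≥0∞) • gaussianReal (-a) (σ ^ 2).toNNReal +
          (1 / 2 : ℝ≥0∞) • gaussianReal a (σ ^ 2).toNNReal)
      ≤ a ^ 4 / (4 * σ ^ 4) := by
  set v := (σ ^ 2).toNNReal
  have hvσ : (v : ℝ) = σ ^ 2 := Real.coe_toNNReal _ (by positivity)
  have hv : v ≠ 0 := by rw [← NNReal.coe_ne_zero, hvσ]; positivity
  rw [klDiv_gaussianReal_half_smul_neg_add_half_smul hv]
  have hlog_cosh := integral_log_cosh_mul_gaussianReal_ge hv (a / v)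
  calc a ^ 2 / (2 * v) - ∫ x, log (cosh (a / v * x)) ∂gaussianReal 0 v
      ≤ a ^ 2 / (2 * v) - ((a / v) ^ 2 * v / 2 - (a / v) ^ 4 * v ^ 2 / 4) := by linarith
    _ = a ^ 4 / (4 * σ ^ 4) := by
        rw [hvσ]
        field_simp
        ring

/-- For `σ > 0` and `0 ≤ a < σ`, letting `Q_a` be the equal mixture
`(1/2)·N(−a,σ²) + (1/2)·N(a,σ²)`, the Kullback–Leibler divergence satisfies
`D(N(0,σ²) ‖ Q_a) ≤ a⁴/(4σ⁴)`. -/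
theorem stmt_6 (σ a : ℝ) (hσ : 0 < σ) (ha0 : 0 ≤ a) (ha : a < σ) :
    klDiv (gaussianReal 0 (σ ^ 2).toNNReal)
        ((1 / 2 : ℝ≥0∞) • gaussianReal (-a) (σ ^ 2).toNNReal +
          (1 / 2 : ℝ≥0∞) • gaussianReal a (σ ^ 2).toNNReal)
      ≤ a ^ 4 / (4 * σ ^ 4) :=
  stmt_6_general σ a hσ
end

section
/- Let P > 0, σ > 0, and let D = (D₁,…,D_n) be a random vector with independent coordinates D_j ~ N(0, 2P). Let Q(x) = 1 − Φ(x) denote the standard Gaussian upper tail function. Then E[ Q( ‖D‖₂ / (2σ) ) ] ≤ (1 + P/(2σ²))^{−n/2}. -/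
open MeasureTheory ProbabilityTheory Real
open scoped NNReal

/-- The standard Gaussian upper tail function
`Q(x) = 1 − Φ(x) = (1/√(2π))·∫ₓ^∞ e^{−t²/2} dt`. -/
noncomputable def gaussQ (x : ℝ) : ℝ := (gaussianReal 0 1 (Set.Ioi x)).toReal

/-!
The Chernoff bound `Q(x) ≤ exp (-x² / 2)` turns `Q(‖D‖₂ / (2σ))` into `exp (-‖D‖₂² / (8σ²))`,
which factorises over the independent coordinates. Each factor is the Laplace transform of a
scaled `χ²₁` variable: `E[exp (-c X²)] = (1 + 2cv)^(-1/2)` for `X ~ N(0, v)`, obtained by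
completing the Gaussian integral.
-/

lemma gaussQ_le_exp_neg_sq_div_two {x : ℝ} (hx : 0 ≤ x) : gaussQ x ≤ exp (-x ^ 2 / 2) :=
  calc gaussQ x ≤ (gaussianReal 0 1).real {t | x ≤ t} :=
        measureReal_mono fun _ ht => le_of_lt (Set.mem_Ioi.mp ht)
    _ ≤ exp (-x * x) * mgf id (gaussianReal 0 1) x :=
        measure_ge_le_exp_mul_mgf x hx (integrable_exp_mul_gaussianReal x)
    _ = exp (-x ^ 2 / 2) := by
        rw [mgf_id_gaussianReal, ← exp_add]
        congr 1
        push_cast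
        ring

lemma integral_exp_neg_mul_sq_gaussianReal (v : ℝ≥0) {c : ℝ} (hc : 0 ≤ c) :
    ∫ x, exp (-c * x ^ 2) ∂gaussianReal 0 v = (1 + 2 * c * v) ^ (-(1 / 2 : ℝ)) := by
  rcases eq_or_ne v 0 with rfl | hv
  · simp [gaussianReal_zero_var]
  have hv' : (0 : ℝ) < v := NNReal.coe_pos.mpr (pos_iff_ne_zero.mpr hv)
  have hkernel (x : ℝ) : gaussianPDFReal 0 v x • exp (-c * x ^ 2)
      = (√(2 * π * v))⁻¹ * exp (-(c + (2 * (v : ℝ))⁻¹) * x ^ 2) := by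
    rw [gaussianPDFReal, smul_eq_mul, mul_assoc, ← exp_add]
    congr 2
    field_simp
    ring
  rw [integral_gaussianReal_eq_integral_smul hv]
  simp_rw [hkernel]
  have hprecision : (2 * π * v)⁻¹ * (π / (c + (2 * (v : ℝ))⁻¹)) = (1 + 2 * c * v)⁻¹ := by
    field_simp
    ring
  rw [integral_const_mul, integral_gaussian, ← Real.sqrt_inv, ← Real.sqrt_mul (by positivity),
    hprecision, sqrt_eq_rpow, ← rpow_neg_one, ← rpow_mul (by positivity)]
  norm_num

lemma integrable_exp_neg_mul_sum_sq {ι : Type*} [Fintype ι] {μ : Measure (ι → ℝ)}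
    [IsFiniteMeasure μ] {c : ℝ} (hc : 0 ≤ c) :
    Integrable (fun d : ι → ℝ => exp (-c * ∑ j, d j ^ 2)) μ :=
  .of_bound (by fun_prop : Continuous _).aestronglyMeasurable 1 (ae_of_all _ fun d => by
    rw [norm_of_nonneg (exp_nonneg _), exp_le_one_iff]
    exact mul_nonpos_of_nonpos_of_nonneg (neg_nonpos.mpr hc) (by positivity))

lemma integral_exp_neg_mul_sum_sq_pi_gaussianReal {ι : Type*} [Fintype ι] (v : ℝ≥0) {c : ℝ}
    (hc : 0 ≤ c) :
    ∫ d, exp (-c * ∑ j, d j ^ 2) ∂(Measure.pi fun _ : ι => gaussianReal 0 v)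
      = (1 + 2 * c * v) ^ (-(Fintype.card ι : ℝ) / 2) := by
  simp_rw [Finset.mul_sum, exp_sum]
  rw [integral_fintype_prod_eq_pow (fun x => exp (-c * x ^ 2)),
    integral_exp_neg_mul_sq_gaussianReal v hc, ← rpow_natCast, ← rpow_mul (by positivity)]
  ring_nf

/-- Let `P > 0`, `σ > 0`, and let `D = (D₁,…,D_n)` have independent coordinates
`D_j ~ N(0, 2P)`.  Then `E[Q(‖D‖₂/(2σ))] ≤ (1 + P/(2σ²))^{−n/2}`, where
`Q(x) = 1 − Φ(x)` is the standard Gaussian upper tail function. -/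
theorem stmt_11 (n : ℕ) (P σ : ℝ) (hP : 0 < P) (hσ : 0 < σ) :
    ∫ d, gaussQ (Real.sqrt (∑ j, (d j) ^ 2) / (2 * σ))
        ∂(Measure.pi fun _ : Fin n => gaussianReal 0 (2 * P).toNNReal)
      ≤ (1 + P / (2 * σ ^ 2)) ^ (-(n : ℝ) / 2) := by
  set c : ℝ := (8 * σ ^ 2)⁻¹ with hc_def
  have hc : 0 ≤ c := by positivity
  have hQ (d : Fin n → ℝ) :
      gaussQ (√(∑ j, d j ^ 2) / (2 * σ)) ≤ exp (-c * ∑ j, d j ^ 2) := by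
    refine (gaussQ_le_exp_neg_sq_div_two (by positivity)).trans_eq ?_
    rw [div_pow, sq_sqrt (by positivity), hc_def]
    field_simp
    ring
  calc _ ≤ ∫ d, exp (-c * ∑ j, d j ^ 2)
          ∂(Measure.pi fun _ : Fin n => gaussianReal 0 (2 * P).toNNReal) :=
        integral_mono_of_nonneg (ae_of_all _ fun _ => ENNReal.toReal_nonneg)
          (integrable_exp_neg_mul_sum_sq hc) (ae_of_all _ hQ)
    _ = (1 + P / (2 * σ ^ 2)) ^ (-(n : ℝ) / 2) := by
        rw [integral_exp_neg_mul_sum_sq_pi_gaussianReal _ hc, coe_toNNReal _ (by positivity),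
          Fintype.card_fin, hc_def]
        field_simp
        ring
end

section
/- Let n ≥ 1, M ≥ 2, P > 0, σ_b > 0. Draw M codewords C(1), …, C(M) ∈ ℝⁿ independently, each with i.i.d. coordinates distributed N(0,P), and independently draw a noise vector Z ∈ ℝⁿ with i.i.d. coordinates N(0,σ_b²). Fix k ∈ {1,…,M} and let Y = C(k) + Z. Then the probability (over codebook and noise) that there exists i ≠ k with ‖Y − C(i)‖₂ ≤ ‖Y − C(k)‖₂ is at most (M−1)·(1 + P/(2σ_b²))^{−n/2}. -/
/-!
Union bound over the `M - 1` wrong competitors, then a Chernoff bound for each pair. With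
`D = C(k) - C(i)` and noise `Z`, the competitor `C(i)` is at least as close to `Y` as `C(k)` iff
`‖D‖² + 2⟪D, Z⟫ ≤ 0`, whose probability is at most `E exp(-(‖D‖² + 2⟪D, Z⟫) / (4σ²))`. The
expectation factors over coordinates; averaging one coordinate over the noise leaves
`E exp(-(Dⱼ)² / (8σ²))` with `Dⱼ ~ N(0, 2P)`, which is `(1 + P / (2σ²))^(-1/2)`.
-/

open MeasureTheory ProbabilityTheory Real
open scoped NNReal ENNReal

lemma lintegral_exp_quadratic_gaussianReal (v : ℝ≥0) {a : ℝ} (ha : 0 ≤ a) (b c : ℝ) :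
    ∫⁻ x, ENNReal.ofReal (exp (-(a * x ^ 2) + b * x + c)) ∂gaussianReal 0 v =
      ENNReal.ofReal ((√(1 + 2 * a * v))⁻¹ * exp (c + b ^ 2 * v / (2 * (1 + 2 * a * v)))) := by
  rcases eq_or_ne v 0 with rfl | hv
  · simp [gaussianReal_zero_var]
  have hv' : (0 : ℝ) < v := by positivity
  set κ : ℝ := 1 + 2 * a * v
  have hκ : 0 < κ := by positivity
  set w : ℝ≥0 := ⟨v / κ, by positivity⟩
  have hwv : (w : ℝ) = v / κ := rfl
  have hw : w ≠ 0 := by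
    rw [ne_eq, ← NNReal.coe_eq_zero, hwv]; exact (div_pos hv' hκ).ne'
  set C : ℝ := (√κ)⁻¹ * exp (c + b ^ 2 * v / (2 * κ))
  -- completing the square: the exponential tilt of `N(0, v)` is a multiple of `N(b w, w)`
  have tilt : ∀ x, gaussianPDFReal 0 v x * exp (-(a * x ^ 2) + b * x + c) =
      C * gaussianPDFReal (b * w) w x := by
    intro x
    have hsqrt : √(2 * π * w) = √(2 * π * v) * (√κ)⁻¹ := by
      rw [← sqrt_inv, ← sqrt_mul (by positivity), hwv]
      ring_nf
    have hexp : -(x - 0) ^ 2 / (2 * v) + (-(a * x ^ 2) + b * x + c) =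
        c + b ^ 2 * v / (2 * κ) + -(x - b * w) ^ 2 / (2 * w) := by
      rw [hwv]; field_simp; ring
    simp only [gaussianPDFReal, hsqrt, C, mul_inv, inv_inv]
    rw [mul_assoc, ← exp_add, hexp, exp_add]
    field_simp
  rw [gaussianReal_of_var_ne_zero 0 hv,
    lintegral_withDensity_eq_lintegral_mul _ (measurable_gaussianPDF 0 v) (by fun_prop)]
  simp only [Pi.mul_apply, gaussianPDF, ← ENNReal.ofReal_mul (gaussianPDFReal_nonneg 0 v _), tilt]
  simp only [ENNReal.ofReal_mul (by positivity : 0 ≤ C)]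
  rw [lintegral_const_mul _ (by fun_prop), lintegral_gaussianPDFReal_eq_one _ hw, mul_one]

lemma lintegral_pi_prod_eq_pow {ι X : Type*} [Fintype ι] [MeasurableSpace X] (μ : Measure X)
    [IsProbabilityMeasure μ] {f : X → ℝ≥0∞} (hf : Measurable f) :
    ∫⁻ x, ∏ i, f (x i) ∂Measure.pi (fun _ : ι => μ) = (∫⁻ x, f x ∂μ) ^ Fintype.card ι := by
  rw [lintegral_prod_eq_prod_lintegral_of_indepFun _ _
      (iIndepFun_pi (X := fun _ => f) fun _ => hf.aemeasurable)
      fun i => hf.comp (measurable_pi_apply i),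
    ← Finset.card_univ, ← Finset.prod_const]
  exact Finset.prod_congr rfl fun i _ => (measurePreserving_eval _ i).lintegral_comp hf

lemma measurePreserving_eval_prod_eval {κ X : Type*} [Fintype κ] [MeasurableSpace X]
    (μ : Measure X) [IsProbabilityMeasure μ] {k i : κ} (hik : i ≠ k) :
    MeasurePreserving (fun c : κ → X => (c k, c i)) (Measure.pi fun _ => μ) (μ.prod μ) := by
  have hindep : IndepFun (fun c : κ → X => c k) (fun c => c i) (Measure.pi fun _ => μ) :=
    (iIndepFun_pi (X := fun _ => id) fun _ => aemeasurable_id).indepFun hik.symm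
  refine ⟨by fun_prop, ?_⟩
  rw [(indepFun_iff_map_prod_eq_prod_map_map (measurable_pi_apply k).aemeasurable
      (measurable_pi_apply i).aemeasurable).1 hindep,
    (measurePreserving_eval _ k).map_eq, (measurePreserving_eval _ i).map_eq]

lemma measurePreserving_zip_eval_prod_eval {ι κ X Y : Type*} [Fintype ι] [Fintype κ]
    [MeasurableSpace X] [MeasurableSpace Y] (μ : Measure X) [IsProbabilityMeasure μ]
    (ν : Measure Y) [IsProbabilityMeasure ν] {k i : κ} (hik : i ≠ k) :
    MeasurePreserving (fun ω : (κ → ι → X) × (ι → Y) => fun j => ((ω.1 k j, ω.1 i j), ω.2 j))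
      ((Measure.pi fun _ : κ => Measure.pi fun _ : ι => μ).prod (Measure.pi fun _ : ι => ν))
      (Measure.pi fun _ : ι => (μ.prod μ).prod ν) := by
  have pair := (measurePreserving_eval_prod_eval (Measure.pi fun _ : ι => μ) hik).prod
    (MeasurePreserving.id (Measure.pi fun _ : ι => ν))
  have zip₁ :=
    (measurePreserving_arrowProdEquivProdArrow X X ι (fun _ => μ) (fun _ => μ)).symm.prod
      (MeasurePreserving.id (Measure.pi fun _ : ι => ν))
  have zip₂ := (measurePreserving_arrowProdEquivProdArrow (X × X) Y ι
    (fun _ => μ.prod μ) (fun _ => ν)).symm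
  exact zip₂.comp (zip₁.comp pair)

lemma lintegral_exp_chernoff_gaussian (P : ℝ≥0) {s : ℝ≥0} (hs : s ≠ 0) :
    ∫⁻ p, ENNReal.ofReal
        (exp (-((4 * (s : ℝ))⁻¹ * ((p.1.1 - p.1.2) ^ 2 + 2 * (p.1.1 - p.1.2) * p.2))))
      ∂((gaussianReal 0 P).prod (gaussianReal 0 P)).prod (gaussianReal 0 s) =
      ENNReal.ofReal (√(1 + P / (2 * s)))⁻¹ := by
  set κ : ℝ := 1 + P / (4 * s)
  have hκ : 0 < κ := by positivity
  have noise (x y : ℝ) :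
      ∫⁻ u, ENNReal.ofReal (exp (-((4 * (s : ℝ))⁻¹ * ((x - y) ^ 2 + 2 * (x - y) * u))))
        ∂gaussianReal 0 s =
        ENNReal.ofReal (exp (-((8 * (s : ℝ))⁻¹ * (x - y) ^ 2))) := by
    convert lintegral_exp_quadratic_gaussianReal s le_rfl (-((2 * (s : ℝ))⁻¹ * (x - y)))
      (-((4 * (s : ℝ))⁻¹ * (x - y) ^ 2)) using 5
    · ring
    · simp only [mul_zero, zero_mul, add_zero, sqrt_one, inv_one, one_mul]
      congr 1
      field_simp
      ring
  have competitor (x : ℝ) :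
      ∫⁻ y, ENNReal.ofReal (exp (-((8 * (s : ℝ))⁻¹ * (x - y) ^ 2))) ∂gaussianReal 0 P =
        ENNReal.ofReal ((√κ)⁻¹ * exp (-((8 * s * κ)⁻¹ * x ^ 2))) := by
    convert lintegral_exp_quadratic_gaussianReal P (by positivity : (0 : ℝ) ≤ (8 * (s : ℝ))⁻¹)
      ((4 * (s : ℝ))⁻¹ * x) (-((8 * (s : ℝ))⁻¹ * x ^ 2)) using 5
    · ring
    · simp only [κ]; field_simp; ring
    · simp only [κ]; field_simp; ring
  have transmitted :
      ∫⁻ x, ENNReal.ofReal ((√κ)⁻¹ * exp (-((8 * s * κ)⁻¹ * x ^ 2))) ∂gaussianReal 0 P =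
        ENNReal.ofReal (√(1 + P / (2 * s)))⁻¹ := by
    simp only [ENNReal.ofReal_mul (by positivity : 0 ≤ (√κ)⁻¹)]
    rw [lintegral_const_mul _ (by fun_prop)]
    convert congrArg (ENNReal.ofReal (√κ)⁻¹ * ·) (lintegral_exp_quadratic_gaussianReal P
      (by positivity : (0 : ℝ) ≤ (8 * s * κ)⁻¹) 0 0) using 2
    · simp
    · rw [← ENNReal.ofReal_mul (by positivity)]
      simp only [ne_eq, OfNat.ofNat_ne_zero, not_false_eq_true, zero_pow, zero_mul, zero_div,
        add_zero, exp_zero, mul_one]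
      rw [← mul_inv, ← sqrt_mul hκ.le]
      congr 3
      simp only [κ]
      field_simp
      ring
  rw [lintegral_prod _ (by fun_prop)]
  simp only [noise]
  rw [lintegral_prod _ (by fun_prop)]
  simp only [competitor, transmitted]

lemma measure_nonpos_le_lintegral_exp_neg_mul {Ω : Type*} [MeasurableSpace Ω] (μ : Measure Ω)
    {f : Ω → ℝ} (hf : Measurable f) {t : ℝ} (ht : 0 ≤ t) :
    μ {ω | f ω ≤ 0} ≤ ∫⁻ ω, ENNReal.ofReal (exp (-(t * f ω))) ∂μ :=
  calc μ {ω | f ω ≤ 0} ≤ μ {ω | 1 ≤ ENNReal.ofReal (exp (-(t * f ω)))} := by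
        refine measure_mono fun ω (hω : f ω ≤ 0) => ?_
        simp only [Set.mem_ofPred_eq, ENNReal.one_le_ofReal, one_le_exp_iff, neg_nonneg]
        exact mul_nonpos_of_nonneg_of_nonpos ht hω
    _ ≤ ∫⁻ ω, ENNReal.ofReal (exp (-(t * f ω))) ∂μ := by
        simpa using mul_meas_ge_le_lintegral₀
          (f := fun ω => ENNReal.ofReal (exp (-(t * f ω)))) (by fun_prop) 1

lemma measure_pairwise_error_le {ι κ : Type*} [Fintype ι] [Fintype κ] (P : ℝ≥0) {s : ℝ≥0}
    (hs : s ≠ 0) {k i : κ} (hik : i ≠ k) :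
    ((Measure.pi fun _ : κ => Measure.pi fun _ : ι => gaussianReal 0 P).prod
        (Measure.pi fun _ : ι => gaussianReal 0 s))
      {ω | ∑ j, ((ω.1 k j - ω.1 i j) ^ 2 + 2 * (ω.1 k j - ω.1 i j) * ω.2 j) ≤ 0} ≤
      ENNReal.ofReal (√(1 + P / (2 * s)))⁻¹ ^ Fintype.card ι := by
  set g : (ℝ × ℝ) × ℝ → ℝ≥0∞ := fun p =>
    ENNReal.ofReal (exp (-((4 * (s : ℝ))⁻¹ * ((p.1.1 - p.1.2) ^ 2 + 2 * (p.1.1 - p.1.2) * p.2))))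
  have factor (ω : (κ → ι → ℝ) × (ι → ℝ)) :
      ENNReal.ofReal (exp (-((4 * (s : ℝ))⁻¹ *
        ∑ j, ((ω.1 k j - ω.1 i j) ^ 2 + 2 * (ω.1 k j - ω.1 i j) * ω.2 j)))) =
        ∏ j, g ((ω.1 k j, ω.1 i j), ω.2 j) := by
    rw [Finset.mul_sum, ← Finset.sum_neg_distrib, exp_sum,
      ENNReal.ofReal_prod_of_nonneg fun _ _ => (exp_pos _).le]
  -- `t = 1 / (4 s)` minimises the Chernoff bound
  refine (measure_nonpos_le_lintegral_exp_neg_mul _ (by fun_prop)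
    (by positivity : 0 ≤ (4 * (s : ℝ))⁻¹)).trans_eq ?_
  simp only [factor]
  rw [(measurePreserving_zip_eval_prod_eval _ _ hik).lintegral_comp
      (f := fun q => ∏ j, g (q j)) (by fun_prop),
    lintegral_pi_prod_eq_pow _ (by fun_prop), lintegral_exp_chernoff_gaussian P hs]

theorem stmt_12_general (n M : ℕ) (P σb : ℝ)
    (hP : 0 < P) (hσb : 0 < σb) (k : Fin M) :
    (((Measure.pi fun _ : Fin M => Measure.pi fun _ : Fin n =>
            gaussianReal 0 P.toNNReal).prod
        (Measure.pi fun _ : Fin n => gaussianReal 0 (σb ^ 2).toNNReal))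
      {ω : (Fin M → Fin n → ℝ) × (Fin n → ℝ) |
        ∃ i, i ≠ k ∧
          Real.sqrt (∑ j, ((ω.1 k j + ω.2 j) - ω.1 i j) ^ 2) ≤
            Real.sqrt (∑ j, ((ω.1 k j + ω.2 j) - ω.1 k j) ^ 2)}).toReal
      ≤ (M - 1) * (1 + P / (2 * σb ^ 2)) ^ (-(n : ℝ) / 2) := by
  set μ := (Measure.pi fun _ : Fin M => Measure.pi fun _ : Fin n =>
      gaussianReal 0 P.toNNReal).prod
    (Measure.pi fun _ : Fin n => gaussianReal 0 (σb ^ 2).toNNReal)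
  set β := 1 + P / (2 * σb ^ 2)
  have hβ : 0 < β := by positivity
  have hs : (σb ^ 2).toNNReal ≠ 0 := by simpa using hσb.ne'
  have pairwise (i : Fin M) (hik : i ≠ k) :
      μ {ω | ∑ j, ((ω.1 k j - ω.1 i j) ^ 2 + 2 * (ω.1 k j - ω.1 i j) * ω.2 j) ≤ 0} ≤
        ENNReal.ofReal (β ^ (-(n : ℝ) / 2)) := by
    refine (measure_pairwise_error_le P.toNNReal hs hik).trans_eq ?_
    rw [Fintype.card_fin, ← ENNReal.ofReal_pow (by positivity), coe_toNNReal P hP.le,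
      coe_toNNReal _ (by positivity), sqrt_eq_rpow, ← rpow_neg hβ.le, ← rpow_natCast,
      ← rpow_mul hβ.le]
    ring_nf
  have closer (ω : (Fin M → Fin n → ℝ) × (Fin n → ℝ)) (i : Fin M)
      (h : √(∑ j, ((ω.1 k j + ω.2 j) - ω.1 i j) ^ 2) ≤
        √(∑ j, ((ω.1 k j + ω.2 j) - ω.1 k j) ^ 2)) :
      ∑ j, ((ω.1 k j - ω.1 i j) ^ 2 + 2 * (ω.1 k j - ω.1 i j) * ω.2 j) ≤ 0 := by
    rw [sqrt_le_sqrt_iff (Finset.sum_nonneg fun _ _ => sq_nonneg _), ← sub_nonpos,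
      ← Finset.sum_sub_distrib] at h
    exact (Finset.sum_congr rfl fun j _ => by ring).trans_le h
  have hM : (1 : ℝ) ≤ M := by exact_mod_cast k.pos
  refine ENNReal.toReal_le_of_le_ofReal
    (mul_nonneg (sub_nonneg.2 hM) (rpow_nonneg hβ.le _)) ?_
  calc _ ≤ _ := measure_mono fun ω (⟨i, hik, h⟩ : ∃ i, i ≠ k ∧ _) =>
        Set.mem_biUnion (Finset.mem_erase.2 ⟨hik, Finset.mem_univ i⟩) (closer ω i h)
    _ ≤ _ := measure_biUnion_finset_le _ _
    _ ≤ ∑ _i ∈ Finset.univ.erase k, ENNReal.ofReal (β ^ (-(n : ℝ) / 2)) :=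
        Finset.sum_le_sum fun i hi => pairwise i (Finset.ne_of_mem_erase hi)
    _ = _ := by
        rw [Finset.sum_const, Finset.card_erase_of_mem (Finset.mem_univ k), Finset.card_univ,
          Fintype.card_fin, nsmul_eq_mul, ← ENNReal.ofReal_natCast,
          ← ENNReal.ofReal_mul (Nat.cast_nonneg _), Nat.cast_pred k.pos]

/-- Let `n ≥ 1`, `M ≥ 2`, `P > 0`, `σ_b > 0`.  Draw `M` codewords
`C(1), …, C(M) ∈ ℝⁿ` independently, each with i.i.d. coordinates `N(0,P)`, and
independently a noise vector `Z ∈ ℝⁿ` with i.i.d. coordinates `N(0,σ_b²)`.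
Fix `k` and let `Y = C(k) + Z`.  Then the probability (over codebook and
noise) that some `i ≠ k` satisfies `‖Y − C(i)‖₂ ≤ ‖Y − C(k)‖₂` is at most
`(M−1)·(1 + P/(2σ_b²))^{−n/2}`. -/
theorem stmt_12 (n M : ℕ) (hn : 1 ≤ n) (hM : 2 ≤ M) (P σb : ℝ)
    (hP : 0 < P) (hσb : 0 < σb) (k : Fin M) :
    (((Measure.pi fun _ : Fin M => Measure.pi fun _ : Fin n =>
            gaussianReal 0 P.toNNReal).prod
        (Measure.pi fun _ : Fin n => gaussianReal 0 (σb ^ 2).toNNReal))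
      {ω : (Fin M → Fin n → ℝ) × (Fin n → ℝ) |
        ∃ i, i ≠ k ∧
          Real.sqrt (∑ j, ((ω.1 k j + ω.2 j) - ω.1 i j) ^ 2) ≤
            Real.sqrt (∑ j, ((ω.1 k j + ω.2 j) - ω.1 k j) ^ 2)}).toReal
      ≤ (M - 1) * (1 + P / (2 * σb ^ 2)) ^ (-(n : ℝ) / 2) :=
  stmt_12_general n M P σb hP hσb k
end

section
/- Let σ > 0 and 0 ≤ a ≤ √6·σ, and let p = Q(a/σ) = 1 − Φ(a/σ) be the crossover probability of the binary symmetric channel induced by hard-decision decoding of antipodal signals ±a over Gaussian noise of power σ². Then 1 − H₂(p) ≥ (1/(π ln 2))·( a/σ − a³/(6σ³) )², where H₂(p) = −p·log₂ p − (1−p)·log₂(1−p) is the binary entropy function. -/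
open MeasureTheory ProbabilityTheory Real

/-- The binary entropy function (in bits):
`H₂(p) = −p·log₂ p − (1−p)·log₂(1−p)`, with `H₂(0) = H₂(1) = 0`. -/
noncomputable def binEntropyBits (p : ℝ) : ℝ :=
  -p * Real.logb 2 p - (1 - p) * Real.logb 2 (1 - p)

/-!
Integrating `exp (-t²/2) ≥ 1 - t²/2` over `[0, x]` gives `Q(x) ≤ 1/2 - c` with
`c = (x - x³/6)/√(2π)`, which is nonnegative for `x ≤ √6`. On the entropy side, the defect
`log 2 - H(p) - (1 - 2p)²/2` is antitone on `[0, 1/2]`, because its derivative reduces to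
`log ((1 + u)/(1 - u)) ≥ 2u` with `u = 1 - 2p`; it vanishes at `p = 1/2`. Hence
`1 - H₂(p) ≥ (1 - 2p)²/(2 ln 2) ≥ 2c²/ln 2`.
-/

lemma two_mul_le_log_one_add_sub_log_one_sub {u : ℝ} (h0 : 0 ≤ u) (h1 : u < 1) :
    2 * u ≤ log (1 + u) - log (1 - u) := by
  have hsum := hasSum_log_sub_log_of_abs_lt_one (abs_lt.mpr ⟨by linarith, h1⟩)
  simpa using le_hasSum hsum 0 fun k _ => by positivity

lemma binEntropy_le_log_two_sub_sq_of_le_two_inv {p : ℝ} (h0 : 0 ≤ p) (h1 : p ≤ 2⁻¹) :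
    binEntropy p ≤ log 2 - (1 - 2 * p) ^ 2 / 2 := by
  set F : ℝ → ℝ := fun p => log 2 - binEntropy p - (1 - 2 * p) ^ 2 / 2
  have hF_deriv {x : ℝ} (hx0 : 0 < x) (hx1 : x < 2⁻¹) :
      HasDerivAt F (log x - log (1 - x) + 2 * (1 - 2 * x)) x := by
    have hH := hasDerivAt_binEntropy hx0.ne' (by linarith : x < 1).ne
    have hlin : HasDerivAt (fun y : ℝ => 1 - 2 * y) (-2) x := by
      simpa using ((hasDerivAt_id x).const_mul 2).const_sub 1
    exact (((hasDerivAt_const x (log 2)).fun_sub hH).fun_sub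
      ((hlin.fun_pow 2).div_const 2)).congr_deriv (by push_cast; ring)
  have hF_anti : AntitoneOn F (Set.Icc 0 2⁻¹) := by
    refine antitoneOn_of_deriv_nonpos (convex_Icc 0 2⁻¹) ?_ ?_ ?_
    · exact (continuous_const.sub binEntropy_continuous |>.sub (by fun_prop)).continuousOn
    · rw [interior_Icc]
      exact fun x ⟨hx0, hx1⟩ => (hF_deriv hx0 hx1).differentiableAt.differentiableWithinAt
    · rw [interior_Icc]
      rintro x ⟨hx0, hx1⟩
      rw [(hF_deriv hx0 hx1).deriv]
      -- the substitution `u = 1 - 2x` turns this into `2u ≤ log (1 + u) - log (1 - u)`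
      have h := two_mul_le_log_one_add_sub_log_one_sub (u := 1 - 2 * x) (by linarith) (by linarith)
      rw [show 1 + (1 - 2 * x) = 2 * (1 - x) by ring, show 1 - (1 - 2 * x) = 2 * x by ring,
        log_mul two_ne_zero (by linarith), log_mul two_ne_zero hx0.ne'] at h
      linarith
  have h := hF_anti ⟨h0, h1⟩ ⟨by norm_num, le_rfl⟩ h1
  simp only [F, binEntropy_two_inv] at h
  norm_num at h
  linarith

lemma binEntropy_le_log_two_sub_sq {p : ℝ} (h0 : 0 ≤ p) (h1 : p ≤ 1) :
    binEntropy p ≤ log 2 - (1 - 2 * p) ^ 2 / 2 := by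
  rcases le_total p 2⁻¹ with hp | hp
  · exact binEntropy_le_log_two_sub_sq_of_le_two_inv h0 hp
  · have h := binEntropy_le_log_two_sub_sq_of_le_two_inv (p := 1 - p) (by linarith) (by linarith)
    rw [binEntropy_one_sub] at h
    linarith

lemma binEntropyBits_eq (p : ℝ) : binEntropyBits p = binEntropy p / log 2 := by
  rw [binEntropyBits, binEntropy, log_inv, log_inv, logb, logb]
  ring

lemma sq_one_sub_two_mul_div_le_one_sub_binEntropyBits {p : ℝ} (h0 : 0 ≤ p) (h1 : p ≤ 1) :
    (1 - 2 * p) ^ 2 / (2 * log 2) ≤ 1 - binEntropyBits p := by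
  have hlog2 : 0 < log 2 := log_pos one_lt_two
  rw [binEntropyBits_eq, le_sub_iff_add_le, div_add_div _ _ (by positivity) hlog2.ne',
    div_le_one (by positivity)]
  nlinarith [binEntropy_le_log_two_sub_sq h0 h1]

lemma gaussianPDFReal_zero_one (t : ℝ) :
    gaussianPDFReal 0 1 t = (√(2 * π))⁻¹ * exp (-(t ^ 2) / 2) := by
  simp [gaussianPDFReal]

lemma gaussQ_eq_integral (x : ℝ) : gaussQ x = ∫ t in Set.Ioi x, gaussianPDFReal 0 1 t := by
  rw [gaussQ, gaussianReal_apply_eq_integral 0 one_ne_zero,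
    ENNReal.toReal_ofReal (setIntegral_nonneg measurableSet_Ioi
      fun t _ => gaussianPDFReal_nonneg 0 1 t)]

lemma gaussQ_eq_half_sub_integral {x : ℝ} (hx : 0 ≤ x) :
    gaussQ x = 1 / 2 - ∫ t in (0)..x, gaussianPDFReal 0 1 t := by
  have hhalf : ∫ t in Set.Ioi (0 : ℝ), gaussianPDFReal 0 1 t = 1 / 2 := by
    have heven : (fun t => gaussianPDFReal 0 1 |t|) = gaussianPDFReal 0 1 := by
      ext t; rw [gaussianPDFReal_zero_one, gaussianPDFReal_zero_one, sq_abs]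
    have h := integral_comp_abs (f := gaussianPDFReal 0 1)
    rw [heven, integral_gaussianPDFReal_eq_one 0 one_ne_zero] at h
    linarith
  rw [gaussQ_eq_integral, intervalIntegral.integral_of_le hx, ← hhalf,
    ← Set.Ioc_union_Ioi_eq_Ioi hx, setIntegral_union (Set.Ioc_disjoint_Ioi le_rfl)
      measurableSet_Ioi (integrable_gaussianPDFReal 0 1).integrableOn
      (integrable_gaussianPDFReal 0 1).integrableOn]
  ring

lemma gaussQ_le_half_sub {x : ℝ} (hx : 0 ≤ x) :
    gaussQ x ≤ 1 / 2 - (√(2 * π))⁻¹ * (x - x ^ 3 / 6) := by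
  have htaylor : ∫ t in (0)..x, (√(2 * π))⁻¹ * (1 - t ^ 2 / 2) =
      (√(2 * π))⁻¹ * (x - x ^ 3 / 6) := by
    rw [intervalIntegral.integral_const_mul]
    congr 1
    rw [intervalIntegral.integral_sub intervalIntegrable_const
      ((intervalIntegral.intervalIntegrable_pow 2).div_const 2)]
    simp only [intervalIntegral.integral_const, intervalIntegral.integral_div, integral_pow,
      smul_eq_mul]
    ring
  have hmono : ∫ t in (0)..x, (√(2 * π))⁻¹ * (1 - t ^ 2 / 2) ≤
      ∫ t in (0)..x, gaussianPDFReal 0 1 t := by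
    refine intervalIntegral.integral_mono_on hx ((by fun_prop : Continuous _).intervalIntegrable _ _)
      (integrable_gaussianPDFReal 0 1).intervalIntegrable fun t _ => ?_
    rw [gaussianPDFReal_zero_one]
    gcongr
    linarith [add_one_le_exp (-(t ^ 2) / 2)]
  rw [gaussQ_eq_half_sub_integral hx]
  linarith

/-- Let `σ > 0` and `0 ≤ a ≤ √6·σ`, and let `p = Q(a/σ)` be the crossover
probability of the binary symmetric channel induced by hard-decision decoding
of antipodal signals `±a` over Gaussian noise of power `σ²`.  Then
`1 − H₂(p) ≥ (1/(π ln 2))·(a/σ − a³/(6σ³))²`. -/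
theorem stmt_14 (σ a : ℝ) (hσ : 0 < σ) (ha0 : 0 ≤ a)
    (ha : a ≤ Real.sqrt 6 * σ) :
    (1 / (Real.pi * Real.log 2)) * (a / σ - a ^ 3 / (6 * σ ^ 3)) ^ 2 ≤
      1 - binEntropyBits (gaussQ (a / σ)) := by
  set x := a / σ
  have hx0 : 0 ≤ x := div_nonneg ha0 hσ.le
  have hx6 : x ^ 2 ≤ 6 := by
    have : x ≤ √6 := (div_le_iff₀ hσ).mpr ha
    nlinarith [sq_sqrt (show (0 : ℝ) ≤ 6 by norm_num)]
  have hcubic : a ^ 3 / (6 * σ ^ 3) = x ^ 3 / 6 := by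
    simp only [x, div_pow]; ring
  rw [hcubic]
  set c := (√(2 * π))⁻¹ * (x - x ^ 3 / 6)
  have hc0 : 0 ≤ c := mul_nonneg (by positivity) (by nlinarith)
  have hc_sq : c ^ 2 = (x - x ^ 3 / 6) ^ 2 / (2 * π) := by
    rw [mul_pow, inv_pow, sq_sqrt (by positivity)]; ring
  have hQ : gaussQ x ≤ 1 / 2 - c := gaussQ_le_half_sub hx0
  have hQ0 : 0 ≤ gaussQ x := ENNReal.toReal_nonneg
  calc (1 / (π * log 2)) * (x - x ^ 3 / 6) ^ 2
      = (2 * c) ^ 2 / (2 * log 2) := by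
        rw [mul_pow, hc_sq]; field_simp
    _ ≤ (1 - 2 * gaussQ x) ^ 2 / (2 * log 2) := by
        gcongr; linarith
    _ ≤ 1 - binEntropyBits (gaussQ x) :=
        sq_one_sub_two_mul_div_le_one_sub_binEntropyBits hQ0 (by linarith)
end
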